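/- arXiv:2502.03840 — 11 statements merged into one kernel-verified Lean document; each statement's English description precedes it below -/
import Mathlib

section
/- The sub- and super-relaxation operators commute: for every F_0 continuous and nonincreasing in each argument, (R̲(R̄F_0))(p) = (R̄(R̲F_0))(p) for all p ∈ ℝ^N. (The common value is denoted (𝔕F_0)(p), the relaxation of F_0.) -/
open Set

noncomputable section

/-- Coercivity of a one-dimensional Hamiltonian: `h x → +∞` as `|x| → +∞`. -/
def CoerciveHam (h : ℝ → ℝ) : Prop :=
  ∀ M : ℝ, ∃ R : ℝ, ∀ x : ℝ, R ≤ |x| → M ≤ h x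

/-- Semi-coercivity of a junction function: `F p → +∞` as `min_α p α → -∞`. -/
def IsSemiCoercive {N : ℕ} (F : (Fin N → ℝ) → ℝ) : Prop :=
  ∀ M : ℝ, ∃ R : ℝ, ∀ p : Fin N → ℝ, (∃ α, p α ≤ R) → M ≤ F p

/-- `Hmin p = min_α H α (p α)`. -/
def Hmin {N : ℕ} (H : Fin N → ℝ → ℝ) (p : Fin N → ℝ) : ℝ := ⨅ α, H α (p α)

/-- `Hmax p = max_α H α (p α)`. -/
def Hmax {N : ℕ} (H : Fin N → ℝ → ℝ) (p : Fin N → ℝ) : ℝ := ⨆ α, H α (p α)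

/-- Sub-relaxation operator: `(R̲F)(p) = sup_{q ≥ p} min (F q) (Hmin q)`. -/
def Rsub {N : ℕ} (H : Fin N → ℝ → ℝ) (F : (Fin N → ℝ) → ℝ) (p : Fin N → ℝ) : ℝ :=
  sSup {v : ℝ | ∃ q : Fin N → ℝ, p ≤ q ∧ v = min (F q) (Hmin H q)}

/-- Super-relaxation operator: `(R̄F)(p) = inf_{q ≤ p} max (F q) (Hmax q)`. -/
def Rsup {N : ℕ} (H : Fin N → ℝ → ℝ) (F : (Fin N → ℝ) → ℝ) (p : Fin N → ℝ) : ℝ :=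
  sInf {v : ℝ | ∃ q : Fin N → ℝ, q ≤ p ∧ v = max (F q) (Hmax H q)}

/-- Godunov flux: `G(q,p) = max_{[p,q]} h` if `q ≥ p`, `min_{[q,p]} h` if `q ≤ p`. -/
def godunov (h : ℝ → ℝ) (q p : ℝ) : ℝ :=
  if p ≤ q then sSup (h '' Icc p q) else sInf (h '' Icc q p)

/-- `q` satisfies the lower Godunov relation for `F` at `p`: for every `α`, either
`q α = p α` and `F q ≤ H α (p α)`, or `q α > p α` and `F q = max_{[p α, q α]} H α`. -/
def LowerGodunovRel {N : ℕ} (H : Fin N → ℝ → ℝ) (F : (Fin N → ℝ) → ℝ)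
    (p q : Fin N → ℝ) : Prop :=
  ∀ α, (q α = p α ∧ F q ≤ H α (p α)) ∨
    (p α < q α ∧ F q = sSup ((H α) '' Icc (p α) (q α)))

/-- `q` satisfies the upper Godunov relation for `F` at `p`: for every `α`, either
`q α = p α` and `F q ≥ H α (p α)`, or `q α < p α` and `F q = min_{[q α, p α]} H α`. -/
def UpperGodunovRel {N : ℕ} (H : Fin N → ℝ → ℝ) (F : (Fin N → ℝ) → ℝ)
    (p q : Fin N → ℝ) : Prop :=
  ∀ α, (q α = p α ∧ H α (p α) ≤ F q) ∨
    (q α < p α ∧ F q = sInf ((H α) '' Icc (q α) (p α)))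

/-- Lower nonincreasing hull of `h`: `h₋ r = inf_{s ≤ r} h s`. -/
def lowerHull (h : ℝ → ℝ) (r : ℝ) : ℝ := sInf (h '' Iic r)

/-- `H₋ p = max_α (H α)₋ (p α)`. -/
def Hminus {N : ℕ} (H : Fin N → ℝ → ℝ) (p : Fin N → ℝ) : ℝ := ⨆ α, lowerHull (H α) (p α)

/-- `p` is a super-characteristic point of `F` (relative to `H`). -/
def SuperChar {N : ℕ} (H : Fin N → ℝ → ℝ) (F : (Fin N → ℝ) → ℝ) (p : Fin N → ℝ) : Prop :=
  ∃ ε > (0 : ℝ), ∀ α, H α (p α) = F p ∧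
    ∀ q : ℝ, p α < q → q < p α + ε → H α (p α) < H α q

/-- `p` is a sub-characteristic point of `F` (relative to `H`). -/
def SubChar {N : ℕ} (H : Fin N → ℝ → ℝ) (F : (Fin N → ℝ) → ℝ) (p : Fin N → ℝ) : Prop :=
  ∃ ε > (0 : ℝ), ∀ α, H α (p α) = F p ∧
    ∀ q : ℝ, p α - ε < q → q < p α → H α q < H α (p α)

theorem relaxation_operators_commute
    (N : ℕ) (hN : 1 ≤ N)
    (H : Fin N → ℝ → ℝ)
    (hHcont : ∀ α, Continuous (H α))
    (hHcoer : ∀ α, CoerciveHam (H α))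
    (F0 : (Fin N → ℝ) → ℝ)
    (hF0cont : Continuous F0)
    (hF0mono : Antitone F0) :
    ∀ p : Fin N → ℝ, Rsub H (Rsup H F0) p = Rsup H (Rsub H F0) p := by
  haveI : Nonempty (Fin N) := ⟨⟨0, hN⟩⟩
  -- basic facts about Hmin, Hmax
  have hHmin_le : ∀ (x : Fin N → ℝ) (α), Hmin H x ≤ H α (x α) := fun x α =>
    ciInf_le (f := fun β => H β (x β)) ((Set.finite_range _).bddBelow) α
  have hle_Hmax : ∀ (x : Fin N → ℝ) (α), H α (x α) ≤ Hmax H x := fun x α =>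
    le_ciSup (f := fun β => H β (x β)) ((Set.finite_range _).bddAbove) α
  have hHmax_le : ∀ (x : Fin N → ℝ) {c : ℝ}, (∀ α, H α (x α) ≤ c) → Hmax H x ≤ c :=
    fun x c h => ciSup_le (f := fun β => H β (x β)) h
  have hle_Hmin : ∀ (x : Fin N → ℝ) {c : ℝ}, (∀ α, c ≤ H α (x α)) → c ≤ Hmin H x :=
    fun x c h => le_ciInf (f := fun β => H β (x β)) h
  have hHmin_lt : ∀ (x : Fin N → ℝ) {c : ℝ}, (∀ α, c < H α (x α)) → c < Hmin H x := by
    intro x c h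
    obtain ⟨α₀, hα₀⟩ := Finite.exists_min (fun α => H α (x α))
    exact lt_of_lt_of_le (h α₀) (le_ciInf (f := fun β => H β (x β)) hα₀)
  -- facts about A := Rsub H F0 and B := Rsup H F0
  have hA_ge : ∀ r x : Fin N → ℝ, r ≤ x → min (F0 x) (Hmin H x) ≤ Rsub H F0 r := by
    intro r x hrx
    show min (F0 x) (Hmin H x) ≤ sSup {v : ℝ | ∃ q, r ≤ q ∧ v = min (F0 q) (Hmin H q)}
    refine le_csSup ⟨F0 r, ?_⟩ ⟨x, hrx, rfl⟩
    rintro v ⟨y, hy, rfl⟩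
    exact (min_le_left _ _).trans (hF0mono hy)
  have hB_le : ∀ q s : Fin N → ℝ, s ≤ q → Rsup H F0 q ≤ max (F0 s) (Hmax H s) := by
    intro q s hsq
    show sInf {v : ℝ | ∃ r, r ≤ q ∧ v = max (F0 r) (Hmax H r)} ≤ max (F0 s) (Hmax H s)
    refine csInf_le ⟨F0 q, ?_⟩ ⟨s, hsq, rfl⟩
    rintro v ⟨y, hy, rfl⟩
    exact (hF0mono hy).trans (le_max_left _ _)
  have hBanti : ∀ q₁ q₂ : Fin N → ℝ, q₁ ≤ q₂ → Rsup H F0 q₂ ≤ Rsup H F0 q₁ := by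
    intro q₁ q₂ h
    show sInf {v : ℝ | ∃ r, r ≤ q₂ ∧ v = max (F0 r) (Hmax H r)} ≤
      sInf {v : ℝ | ∃ r, r ≤ q₁ ∧ v = max (F0 r) (Hmax H r)}
    refine csInf_le_csInf ⟨F0 q₂, ?_⟩ ⟨_, q₁, le_rfl, rfl⟩ ?_
    · rintro v ⟨y, hy, rfl⟩; exact (hF0mono hy).trans (le_max_left _ _)
    · rintro v ⟨y, hy, rfl⟩; exact ⟨y, hy.trans h, rfl⟩
  intro p
  have eqL : Rsub H (Rsup H F0) p
      = sSup {v : ℝ | ∃ q, p ≤ q ∧ v = min (Rsup H F0 q) (Hmin H q)} := rfl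
  have eqR : Rsup H (Rsub H F0) p
      = sInf {v : ℝ | ∃ r, r ≤ p ∧ v = max (Rsub H F0 r) (Hmax H r)} := rfl
  have hSLbdd : BddAbove {v : ℝ | ∃ q, p ≤ q ∧ v = min (Rsup H F0 q) (Hmin H q)} := by
    refine ⟨Rsup H F0 p, ?_⟩
    rintro v ⟨q, hq, rfl⟩
    exact (min_le_left _ _).trans (hBanti p q hq)
  have hSRbdd : BddBelow {v : ℝ | ∃ r, r ≤ p ∧ v = max (Rsub H F0 r) (Hmax H r)} := by
    refine ⟨min (F0 p) (Hmin H p), ?_⟩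
    rintro v ⟨r, hr, rfl⟩
    exact (hA_ge r p hr).trans (le_max_left _ _)
  -- Key pointwise inequality for the easy direction
  have key1 : ∀ r q : Fin N → ℝ, r ≤ p → p ≤ q →
      min (Rsup H F0 q) (Hmin H q) ≤ max (Rsub H F0 r) (Hmax H r) := by
    intro r q hr hq
    by_contra hcon
    push_neg at hcon
    set lam := max (Rsub H F0 r) (Hmax H r) with hlam
    have hBq : lam < Rsup H F0 q := hcon.trans_le (min_le_left _ _)
    have hMq : lam < Hmin H q := hcon.trans_le (min_le_right _ _)
    have hAr : Rsub H F0 r ≤ lam := le_max_left _ _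
    have hHr : ∀ α, H α (r α) ≤ lam := fun α => (hle_Hmax r α).trans (le_max_right _ _)
    have hHq : ∀ α, lam < H α (q α) := fun α => hMq.trans_le (hHmin_le q α)
    have hrq : r ≤ q := hr.trans hq
    set K : Fin N → Set ℝ := fun α => {x | r α ≤ x ∧ x ≤ q α ∧ H α x ≤ lam} with hK
    have hKne : ∀ α, (K α).Nonempty := fun α => ⟨r α, le_rfl, hrq α, hHr α⟩
    have hKbdd : ∀ α, BddAbove (K α) := fun α => ⟨q α, fun x hx => hx.2.1⟩
    have hKcl : ∀ α, IsClosed (K α) := fun α =>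
      (isClosed_le continuous_const continuous_id).inter
        ((isClosed_le continuous_id continuous_const).inter
          (isClosed_le (hHcont α) continuous_const))
    set s : Fin N → ℝ := fun α => sSup (K α) with hs
    have hsmem : ∀ α, s α ∈ K α := fun α => (hKcl α).csSup_mem (hKne α) (hKbdd α)
    have hsr : ∀ α, r α ≤ s α := fun α => (hsmem α).1
    have hsq : ∀ α, s α ≤ q α := fun α => (hsmem α).2.1
    have hsH : ∀ α, H α (s α) ≤ lam := fun α => (hsmem α).2.2
    have hslt : ∀ α, s α < q α := by
      intro α
      rcases lt_or_eq_of_le (hsq α) with h | h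
      · exact h
      · exact absurd (hsH α) (by rw [h]; exact not_le.mpr (hHq α))
    have habove : ∀ α x, s α < x → x ≤ q α → lam < H α x := by
      intro α x h1 h2
      by_contra hcc
      push_neg at hcc
      have hmem : x ∈ K α := ⟨(hsr α).trans h1.le, h2, hcc⟩
      exact absurd (le_csSup (hKbdd α) hmem) (not_le.mpr h1)
    obtain ⟨α₁, hα₁⟩ := Finite.exists_min (fun α => q α - s α)
    have hδpos : 0 < q α₁ - s α₁ := sub_pos.mpr (hslt α₁)
    have hF0s : F0 s ≤ lam := by
      have hgcont : Continuous (fun t : ℝ => F0 (fun α => s α + t)) :=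
        hF0cont.comp (continuous_pi fun α => continuous_const.add continuous_id)
      have hev : ∀ᶠ t in nhdsWithin 0 (Set.Ioi 0), F0 (fun α => s α + t) ≤ lam := by
        filter_upwards [Ioo_mem_nhdsGT_of_mem (Set.mem_Ico.mpr ⟨le_rfl, hδpos⟩)] with t ht
        have hx1 : ∀ α, s α < s α + t := fun α => lt_add_of_pos_right _ ht.1
        have hx2 : ∀ α, s α + t ≤ q α := fun α => by
          have := hα₁ α; have := ht.2; linarith [hα₁ α, ht.2]
        have hxq : lam < Hmin H (fun α => s α + t) :=
          hHmin_lt _ (fun α => habove α _ (hx1 α) (hx2 α))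
        have hrx : r ≤ (fun α => s α + t) := fun α => (hsr α).trans (hx1 α).le
        have h1 := hA_ge r _ hrx
        by_contra hFx
        push_neg at hFx
        have h2 : lam < min (F0 fun α => s α + t) (Hmin H fun α => s α + t) :=
          lt_min hFx hxq
        linarith
      have htend : Filter.Tendsto (fun t : ℝ => F0 (fun α => s α + t))
          (nhdsWithin 0 (Set.Ioi 0)) (nhds (F0 s)) := by
        have h1 : Filter.Tendsto (fun t : ℝ => F0 (fun α => s α + t))
            (nhdsWithin 0 (Set.Ioi 0)) (nhds (F0 fun α => s α + 0)) :=
          (hgcont.tendsto 0).mono_left nhdsWithin_le_nhds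
        simpa using h1
      exact le_of_tendsto htend hev
    have hHmaxs : Hmax H s ≤ lam := hHmax_le s hsH
    have hsq' : s ≤ q := hsq
    have hfin : Rsup H F0 q ≤ lam := (hB_le q s hsq').trans (max_le hF0s hHmaxs)
    exact absurd hfin (not_le.mpr hBq)
  have dir1 : Rsub H (Rsup H F0) p ≤ Rsup H (Rsub H F0) p := by
    rw [eqL, eqR]
    refine csSup_le ⟨_, p, le_rfl, rfl⟩ ?_
    rintro v ⟨q, hq, rfl⟩
    refine le_csInf ⟨_, p, le_rfl, rfl⟩ ?_
    rintro w ⟨r, hr, rfl⟩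
    exact key1 r q hr hq
  have dir2 : Rsup H (Rsub H F0) p ≤ Rsub H (Rsup H F0) p := by
    refine le_of_forall_pos_le_add ?_
    intro ε hε
    set lam := Rsup H (Rsub H F0) p with hlamdef
    set C : Fin N → Set ℝ := fun α => {x | p α ≤ x ∧ lam - ε ≤ H α x} with hC
    have hCne : ∀ α, (C α).Nonempty := by
      intro α
      obtain ⟨R₀, hR₀⟩ := hHcoer α (lam - ε)
      refine ⟨max (p α) |R₀|, le_max_left _ _, hR₀ _ ?_⟩
      exact (le_abs_self R₀).trans ((le_max_right (p α) |R₀|).trans (le_abs_self _))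
    have hCbdd : ∀ α, BddBelow (C α) := fun α => ⟨p α, fun x hx => hx.1⟩
    have hCcl : ∀ α, IsClosed (C α) := fun α =>
      (isClosed_le continuous_const continuous_id).inter
        (isClosed_le continuous_const (hHcont α))
    set q : Fin N → ℝ := fun α => sInf (C α) with hqdef
    have hqmem : ∀ α, q α ∈ C α := fun α => (hCcl α).csInf_mem (hCne α) (hCbdd α)
    have hpq : p ≤ q := fun α => (hqmem α).1
    have hqH : ∀ α, lam - ε ≤ H α (q α) := fun α => (hqmem α).2
    have hbelow : ∀ α x, p α ≤ x → x < q α → H α x < lam - ε := by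
      intro α x h1 h2
      by_contra hcc
      push_neg at hcc
      exact absurd (csInf_le (hCbdd α) ⟨h1, hcc⟩) (not_le.mpr h2)
    have hHminq : lam - ε ≤ Hmin H q := hle_Hmin q hqH
    have hBq : lam - ε ≤ Rsup H F0 q := by
      show lam - ε ≤ sInf {v : ℝ | ∃ r, r ≤ q ∧ v = max (F0 r) (Hmax H r)}
      refine le_csInf ⟨_, q, le_rfl, rfl⟩ ?_
      rintro v ⟨r', hr', rfl⟩
      by_contra hcc
      push_neg at hcc
      have hFr' : F0 r' < lam - ε := (le_max_left _ _).trans_lt hcc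
      have hHr' : ∀ β, H β (r' β) < lam - ε := fun β =>
        ((hle_Hmax r' β).trans (le_max_right (F0 r') _)).trans_lt hcc
      set r : Fin N → ℝ := fun α => min (r' α) (p α) with hrdef
      have hrp : r ≤ p := fun α => min_le_right _ _
      have hHrlt : ∀ α, H α (r α) < lam - ε := by
        intro α
        rcases le_or_gt (r' α) (p α) with hc | hc
        · have hh : r α = r' α := min_eq_left hc
          rw [hh]; exact hHr' α
        · have hh : r α = p α := min_eq_right hc.le
          rw [hh]
          exact hbelow α (p α) le_rfl (lt_of_lt_of_le hc (hr' α))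
      have hHmaxr : Hmax H r < lam :=
        lt_of_le_of_lt (hHmax_le r (fun α => (hHrlt α).le)) (by linarith)
      have hlamle : lam ≤ max (Rsub H F0 r) (Hmax H r) := by
        rw [eqR]
        exact csInf_le hSRbdd ⟨r, hrp, rfl⟩
      have hAr : lam ≤ Rsub H F0 r := by
        by_contra h'
        push_neg at h'
        exact absurd hlamle (not_le.mpr (max_lt h' hHmaxr))
      have hlt : lam - ε / 2 < Rsub H F0 r := by linarith
      have hltS : lam - ε / 2 <
          sSup {v : ℝ | ∃ q'', r ≤ q'' ∧ v = min (F0 q'') (Hmin H q'')} := hlt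
      have hSne : Set.Nonempty {v : ℝ | ∃ q'', r ≤ q'' ∧ v = min (F0 q'') (Hmin H q'')} :=
        ⟨_, r, le_rfl, rfl⟩
      obtain ⟨v, hvmem, hv⟩ := exists_lt_of_lt_csSup hSne hltS
      obtain ⟨q'', hq'', rfl⟩ := hvmem
      have hF0q'' : lam - ε / 2 < F0 q'' := hv.trans_le (min_le_left _ _)
      have hHq'' : ∀ β, lam - ε / 2 < H β (q'' β) := fun β =>
        (hv.trans_le (min_le_right _ _)).trans_le (hHmin_le q'' β)
      by_cases hge : r' ≤ q''
      · have := hF0mono hge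
        linarith
      · simp only [Pi.le_def, not_forall, not_le] at hge
        obtain ⟨β, hβ⟩ := hge
        have hrβ : r β ≤ q'' β := hq'' β
        rcases le_or_gt (r' β) (p β) with hc | hc
        · have hh : r β = r' β := min_eq_left hc
          rw [hh] at hrβ
          linarith
        · have hh : r β = p β := min_eq_right hc.le
          rw [hh] at hrβ
          have hq''lt : q'' β < q β := hβ.trans_le (hr' β)
          have := hbelow β (q'' β) hrβ hq''lt
          linarith [hHq'' β]
    have hmem : min (Rsup H F0 q) (Hmin H q) ∈
        {v : ℝ | ∃ q', p ≤ q' ∧ v = min (Rsup H F0 q') (Hmin H q')} := ⟨q, hpq, rfl⟩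
    have hfin : lam - ε ≤ Rsub H (Rsup H F0) p := by
      rw [eqL]
      exact le_trans (le_min hBq hHminq) (le_csSup hSLbdd hmem)
    linarith
  exact le_antisymm dir1 dir2
end
end

section
/- The relaxation 𝔕F_0 := R̄(R̲F_0) satisfies 𝔕F_0 = 𝔕(max(F_0, H_-)) and 𝔕F_0 ≥ H_- pointwise on ℝ^N, where max(F_0, H_-)(p) = max(F_0(p), H_-(p)). -/
open Set

noncomputable section

theorem relaxation_of_max_with_lower_hull
    (N : ℕ) (hN : 1 ≤ N)
    (H : Fin N → ℝ → ℝ)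
    (hHcont : ∀ α, Continuous (H α))
    (hHcoer : ∀ α, CoerciveHam (H α))
    (F0 : (Fin N → ℝ) → ℝ)
    (hF0cont : Continuous F0)
    (hF0mono : Antitone F0) :
    ∀ p : Fin N → ℝ,
      Rsup H (Rsub H F0) p
        = Rsup H (Rsub H (fun q => max (F0 q) (Hminus H q))) p ∧
      Hminus H p ≤ Rsup H (Rsub H F0) p := by
  haveI : Nonempty (Fin N) := ⟨⟨0, hN⟩⟩
  -- each H α is bounded below
  have hlb : ∀ α, ∃ c : ℝ, ∀ x : ℝ, c ≤ H α x := by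
    intro α
    obtain ⟨R, hR⟩ := hHcoer α 0
    have h0 : (0:ℝ) ≤ max R 0 := le_max_right _ _
    obtain ⟨x0, -, hx0⟩ := isCompact_Icc.exists_isMinOn
      (s := Icc (-(max R 0)) (max R 0)) ⟨0, by constructor <;> linarith⟩
      ((hHcont α).continuousOn)
    refine ⟨min (H α x0) 0, fun x => ?_⟩
    rcases le_or_gt (max R 0) |x| with h | h
    · exact (min_le_right _ _).trans (hR x ((le_max_left R 0).trans h))
    · have hx := abs_lt.mp h
      exact (min_le_left _ _).trans (hx0 ⟨by linarith [hx.1], le_of_lt hx.2⟩)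
  choose c hc using hlb
  have hbdd : ∀ α r, BddBelow (H α '' Iic r) := fun α r =>
    ⟨c α, by rintro v ⟨x, -, rfl⟩; exact hc α x⟩
  have hne : ∀ (α : Fin N) (r : ℝ), (H α '' Iic r).Nonempty :=
    fun α r => ⟨H α r, r, mem_Iic.mpr le_rfl, rfl⟩
  have hlh_le : ∀ α r, lowerHull (H α) r ≤ H α r := fun α r =>
    csInf_le (hbdd α r) ⟨r, mem_Iic.mpr le_rfl, rfl⟩
  have hlh_anti : ∀ α, Antitone (lowerHull (H α)) := fun α r r' h =>
    csInf_le_csInf (hbdd α r') (hne α r) (image_mono (Iic_subset_Iic.mpr h))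
  have hHm_le : ∀ q : Fin N → ℝ, Hminus H q ≤ Hmax H q := fun q =>
    ciSup_mono ((finite_range _).bddAbove) fun α => hlh_le α (q α)
  have hHm_anti : Antitone (Hminus H) := fun q p h =>
    ciSup_mono ((finite_range _).bddAbove) fun α => hlh_anti α (h α)
  set F2 : (Fin N → ℝ) → ℝ := fun q => max (F0 q) (Hminus H q) with hF2def
  have hF2r : ∀ r, F2 r = max (F0 r) (Hminus H r) := fun r => rfl
  have hbddS1 : ∀ q : Fin N → ℝ,
      BddAbove {v : ℝ | ∃ r, q ≤ r ∧ v = min (F0 r) (Hmin H r)} := fun q =>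
    ⟨F0 q, by rintro v ⟨r, hr, rfl⟩; exact (min_le_left _ _).trans (hF0mono hr)⟩
  have hbddS2 : ∀ q : Fin N → ℝ,
      BddAbove {v : ℝ | ∃ r, q ≤ r ∧ v = min (F2 r) (Hmin H r)} := fun q =>
    ⟨max (F0 q) (Hminus H q), by
      rintro v ⟨r, hr, rfl⟩
      exact (min_le_left _ _).trans
        ((hF2r r ▸ max_le_max (hF0mono hr) (hHm_anti hr)))⟩
  have hG12 : ∀ q : Fin N → ℝ, Rsub H F0 q ≤ Rsub H F2 q := by
    intro q
    unfold Rsub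
    refine csSup_le ⟨_, q, le_rfl, rfl⟩ ?_
    rintro v ⟨r, hr, rfl⟩
    calc min (F0 r) (Hmin H r) ≤ min (F2 r) (Hmin H r) :=
          min_le_min (by rw [hF2r]; exact le_max_left _ _) le_rfl
      _ ≤ _ := le_csSup (hbddS2 q) ⟨r, hr, rfl⟩
  have hG21 : ∀ q : Fin N → ℝ, Rsub H F2 q ≤ max (Rsub H F0 q) (Hmax H q) := by
    intro q
    unfold Rsub
    refine csSup_le ⟨_, q, le_rfl, rfl⟩ ?_
    rintro v ⟨r, hr, rfl⟩
    rcases le_total (Hminus H r) (F0 r) with h | h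
    · refine le_max_of_le_left ?_
      have h1 : F2 r = F0 r := (hF2r r).trans (max_eq_left h)
      rw [h1]
      exact le_csSup (hbddS1 q) ⟨r, hr, rfl⟩
    · refine le_max_of_le_right ?_
      calc min (F2 r) (Hmin H r) ≤ F2 r := min_le_left _ _
        _ = Hminus H r := (hF2r r).trans (max_eq_right h)
        _ ≤ Hminus H q := hHm_anti hr
        _ ≤ Hmax H q := hHm_le q
  have hmaxeq : ∀ q : Fin N → ℝ,
      max (Rsub H F0 q) (Hmax H q) = max (Rsub H F2 q) (Hmax H q) := fun q =>
    le_antisymm (max_le_max (hG12 q) le_rfl)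
      (max_le (hG21 q) (le_max_right _ _))
  intro p
  constructor
  · show sInf _ = sInf _
    congr 1
    ext v
    constructor
    · rintro ⟨q, hq, rfl⟩; exact ⟨q, hq, hmaxeq q⟩
    · rintro ⟨q, hq, rfl⟩; exact ⟨q, hq, (hmaxeq q).symm⟩
  · refine le_csInf ⟨_, p, le_rfl, rfl⟩ ?_
    rintro v ⟨q, hq, rfl⟩
    exact (hHm_anti hq).trans ((hHm_le q).trans (le_max_right _ _))
end
end

section
/- Suppose F_0 is semi-coercive. Then for every p ∈ ℝ^N: (i) there exists q ∈ ℝ^N such that F_0(q) = G^α(q^α, p^α) for all α = 1,…,N; (ii) if q_1 and q_2 both satisfy F_0(q_i) = G^α(q_i^α, p^α) for all α, then F_0(q_1) = F_0(q_2). (The common value defines the Godunov relaxation (F_0 G)(p).) -/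
open Set

noncomputable section

section Aux

open Filter Topology

variable {h : ℝ → ℝ}

lemma godunov_of_le {q c : ℝ} (hq : q ≤ c) : godunov h q c = sInf (h '' Icc q c) := by
  rcases eq_or_lt_of_le hq with rfl | hlt
  · simp [godunov, Icc_self]
  · simp [godunov, if_neg (not_le.mpr hlt)]

lemma godunov_of_ge {q c : ℝ} (hq : c ≤ q) : godunov h q c = sSup (h '' Icc c q) := by
  simp [godunov, if_pos hq]

lemma godunov_mono (hc : Continuous h) (c : ℝ) : Monotone fun q => godunov h q c := by
  intro q₁ q₂ hq
  show godunov h q₁ c ≤ godunov h q₂ c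
  rcases le_total c q₁ with h1 | h1
  · rw [godunov_of_ge h1, godunov_of_ge (h1.trans hq)]
    exact csSup_le_csSup (isCompact_Icc.bddAbove_image hc.continuousOn)
      ((nonempty_Icc.2 h1).image _) (image_mono (Icc_subset_Icc_right hq))
  · rcases le_total c q₂ with h2 | h2
    · rw [godunov_of_le h1, godunov_of_ge h2]
      calc sInf (h '' Icc q₁ c) ≤ h c :=
            csInf_le (isCompact_Icc.bddBelow_image hc.continuousOn)
              ⟨c, right_mem_Icc.2 h1, rfl⟩
        _ ≤ sSup (h '' Icc c q₂) :=
            le_csSup (isCompact_Icc.bddAbove_image hc.continuousOn)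
              ⟨c, left_mem_Icc.2 h2, rfl⟩
    · rw [godunov_of_le h1, godunov_of_le h2]
      exact csInf_le_csInf (isCompact_Icc.bddBelow_image hc.continuousOn)
        ((nonempty_Icc.2 h2).image _) (image_mono (Icc_subset_Icc_left hq))

lemma exists_min_on_Iic (hc : Continuous h) (hco : CoerciveHam h) (c : ℝ) :
    ∃ x₀, x₀ ≤ c ∧ ∀ x ≤ c, h x₀ ≤ h x := by
  obtain ⟨R, hR⟩ := hco (h c)
  have hle : -(|R| + |c| + 1) ≤ c := by
    have := neg_abs_le c
    have := abs_nonneg R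
    linarith
  obtain ⟨x₀, hx₀K, hx₀min⟩ :=
    isCompact_Icc.exists_isMinOn (nonempty_Icc.2 hle) hc.continuousOn
  refine ⟨x₀, hx₀K.2, fun x hx => ?_⟩
  by_cases hxK : x ∈ Icc (-(|R| + |c| + 1)) c
  · exact hx₀min hxK
  · have hxlt : x < -(|R| + |c| + 1) := by
      by_contra hge
      exact hxK ⟨not_lt.1 hge, hx⟩
    have hRx : R ≤ |x| := by
      have h1 : -x ≤ |x| := neg_le_abs x
      have h2 : R ≤ |R| := le_abs_self R
      have := abs_nonneg c
      linarith
    calc h x₀ ≤ h c := hx₀min (right_mem_Icc.2 hle)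
      _ ≤ h x := hR x hRx

lemma godunov_at_min (hc : Continuous h) {c x₀ : ℝ} (hx₀ : x₀ ≤ c)
    (hmin : ∀ x ≤ c, h x₀ ≤ h x) : godunov h x₀ c = h x₀ := by
  rw [godunov_of_le hx₀]
  refine le_antisymm (csInf_le (isCompact_Icc.bddBelow_image hc.continuousOn)
    ⟨x₀, left_mem_Icc.2 hx₀, rfl⟩) (le_csInf ((nonempty_Icc.2 hx₀).image _) ?_)
  rintro y ⟨x, hx, rfl⟩
  exact hmin x hx.2

lemma godunov_ge_min (hc : Continuous h) {c x₀ : ℝ} (hx₀ : x₀ ≤ c)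
    (hmin : ∀ x ≤ c, h x₀ ≤ h x) : ∀ q, h x₀ ≤ godunov h q c := by
  intro q
  rcases le_total c q with h1 | h1
  · rw [godunov_of_ge h1]
    calc h x₀ ≤ h c := hmin c le_rfl
      _ ≤ sSup (h '' Icc c q) :=
          le_csSup (isCompact_Icc.bddAbove_image hc.continuousOn)
            ⟨c, left_mem_Icc.2 h1, rfl⟩
  · rw [godunov_of_le h1]
    refine le_csInf ((nonempty_Icc.2 h1).image _) ?_
    rintro y ⟨x, hx, rfl⟩
    exact hmin x hx.2

lemma godunov_coer (hc : Continuous h) (hco : CoerciveHam h) (c : ℝ) :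
    ∀ M, ∃ R, ∀ q, R ≤ q → M ≤ godunov h q c := by
  intro M
  obtain ⟨R, hR⟩ := hco M
  refine ⟨max (|R| + 1) c, fun q hq => ?_⟩
  have h1 : c ≤ q := le_trans (le_max_right _ _) hq
  have h2 : |R| + 1 ≤ q := le_trans (le_max_left _ _) hq
  have h3 : R ≤ |q| := by
    have := le_abs_self R
    have := le_abs_self q
    linarith
  rw [godunov_of_ge h1]
  exact (hR q h3).trans (le_csSup (isCompact_Icc.bddAbove_image hc.continuousOn)
    ⟨q, right_mem_Icc.2 h1, rfl⟩)

lemma godunov_surj (hc : Continuous h) (hco : CoerciveHam h) {c x₀ : ℝ} (hx₀ : x₀ ≤ c)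
    (hmin : ∀ x ≤ c, h x₀ ≤ h x) :
    ∀ lam, h x₀ ≤ lam → ∃ q, godunov h q c = lam := by
  intro lam hlam
  rcases le_total (h c) lam with hcl | hcl
  · -- upper branch
    have hne : {x | c ≤ x ∧ lam ≤ h x}.Nonempty := by
      obtain ⟨R, hR⟩ := hco lam
      refine ⟨max (|R| + 1) c, le_max_right _ _, hR _ ?_⟩
      have h1 : |R| + 1 ≤ max (|R| + 1) c := le_max_left _ _
      have := le_abs_self R
      have := le_abs_self (max (|R| + 1) c)
      linarith
    have hbdd : BddBelow {x | c ≤ x ∧ lam ≤ h x} := ⟨c, fun x hx => hx.1⟩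
    have hclosed : IsClosed {x | c ≤ x ∧ lam ≤ h x} := by
      have : {x | c ≤ x ∧ lam ≤ h x} = Ici c ∩ h ⁻¹' Ici lam := rfl
      rw [this]
      exact isClosed_Ici.inter (isClosed_Ici.preimage hc)
    set q := sInf {x | c ≤ x ∧ lam ≤ h x} with hqdef
    have hqmem : q ∈ {x | c ≤ x ∧ lam ≤ h x} := hclosed.csInf_mem hne hbdd
    have hlow : ∀ x, c ≤ x → x < q → h x < lam := by
      intro x hcx hxq
      by_contra hge
      exact absurd (csInf_le hbdd ⟨hcx, not_lt.1 hge⟩) (not_le.2 hxq)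
    have hq : h q = lam := by
      refine le_antisymm ?_ hqmem.2
      by_contra hgt
      push_neg at hgt
      rcases eq_or_lt_of_le hqmem.1 with heq | hcq
      · rw [← heq] at hgt; linarith
      · have hU : h ⁻¹' Ioi lam ∈ 𝓝 q := hc.continuousAt.preimage_mem_nhds (Ioi_mem_nhds hgt)
        obtain ⟨δ, hδpos, hball⟩ := Metric.mem_nhds_iff.1 hU
        set x := max c (q - δ / 2) with hxdef
        have hx1 : c ≤ x := le_max_left _ _
        have hx2 : x < q := max_lt hcq (by linarith)
        have hx3 : q - δ / 2 ≤ x := le_max_right _ _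
        have hxball : x ∈ Metric.ball q δ := by
          rw [Metric.mem_ball, Real.dist_eq, abs_of_nonpos (by linarith)]
          linarith
        have : lam < h x := hball hxball
        exact absurd (hlow x hx1 hx2) (not_lt.2 this.le)
    refine ⟨q, ?_⟩
    rw [godunov_of_ge hqmem.1]
    apply le_antisymm
    · refine csSup_le ((nonempty_Icc.2 hqmem.1).image _) ?_
      rintro y ⟨x, hx, rfl⟩
      rcases eq_or_lt_of_le hx.2 with rfl | hxq
      · exact hq.le
      · exact (hlow x hx.1 hxq).le
    · exact le_csSup (isCompact_Icc.bddAbove_image hc.continuousOn)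
        ⟨q, right_mem_Icc.2 hqmem.1, hq⟩
  · -- lower branch
    have hne : {x | x ≤ c ∧ h x ≤ lam}.Nonempty := ⟨x₀, hx₀, hlam⟩
    have hbdd : BddAbove {x | x ≤ c ∧ h x ≤ lam} := ⟨c, fun x hx => hx.1⟩
    have hclosed : IsClosed {x | x ≤ c ∧ h x ≤ lam} := by
      have : {x | x ≤ c ∧ h x ≤ lam} = Iic c ∩ h ⁻¹' Iic lam := rfl
      rw [this]
      exact isClosed_Iic.inter (isClosed_Iic.preimage hc)
    set q := sSup {x | x ≤ c ∧ h x ≤ lam} with hqdef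
    have hqmem : q ∈ {x | x ≤ c ∧ h x ≤ lam} := hclosed.csSup_mem hne hbdd
    have hhigh : ∀ x, x ≤ c → q < x → lam < h x := by
      intro x hcx hxq
      by_contra hge
      exact absurd (le_csSup hbdd ⟨hcx, not_lt.1 hge⟩) (not_le.2 hxq)
    have hq : h q = lam := by
      refine le_antisymm hqmem.2 ?_
      by_contra hgt
      push_neg at hgt
      rcases eq_or_lt_of_le hqmem.1 with heq | hcq
      · rw [heq] at hgt; linarith
      · have hU : h ⁻¹' Iio lam ∈ 𝓝 q := hc.continuousAt.preimage_mem_nhds (Iio_mem_nhds hgt)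
        obtain ⟨δ, hδpos, hball⟩ := Metric.mem_nhds_iff.1 hU
        set x := min c (q + δ / 2) with hxdef
        have hx1 : x ≤ c := min_le_left _ _
        have hx2 : q < x := lt_min hcq (by linarith)
        have hx3 : x ≤ q + δ / 2 := min_le_right _ _
        have hxball : x ∈ Metric.ball q δ := by
          rw [Metric.mem_ball, Real.dist_eq, abs_of_nonneg (by linarith)]
          linarith
        have : h x < lam := hball hxball
        exact absurd (hhigh x hx1 hx2) (not_lt.2 this.le)
    refine ⟨q, ?_⟩
    rw [godunov_of_le hqmem.1]
    apply le_antisymm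
    · exact csInf_le (isCompact_Icc.bddBelow_image hc.continuousOn)
        ⟨q, left_mem_Icc.2 hqmem.1, hq⟩
    · refine le_csInf ((nonempty_Icc.2 hqmem.1).image _) ?_
      rintro y ⟨x, hx, rfl⟩
      rcases eq_or_lt_of_le hx.1 with rfl | hxq
      · exact hq.ge
      · exact (hhigh x hx.2 hxq).le

lemma godunov_cont (hc : Continuous h) (hco : CoerciveHam h) {c x₀ : ℝ} (hx₀ : x₀ ≤ c)
    (hmin : ∀ x ≤ c, h x₀ ≤ h x) : Continuous fun q => godunov h q c := by
  set φ : ℝ → ℝ := fun q => godunov h q c with hφdef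
  have hφm : Monotone φ := godunov_mono hc c
  have hφmin : ∀ q, φ x₀ ≤ φ q := by
    intro q
    rw [hφdef]
    simp only
    rw [godunov_at_min hc hx₀ hmin]
    exact godunov_ge_min hc hx₀ hmin q
  have hsurj : ∀ lam, φ x₀ ≤ lam → ∃ q, φ q = lam := by
    intro lam hlam
    rw [hφdef] at hlam
    simp only at hlam
    rw [godunov_at_min hc hx₀ hmin] at hlam
    exact godunov_surj hc hco hx₀ hmin lam hlam
  rw [continuous_iff_continuousAt]
  intro a
  apply continuousAt_iff_continuous_left_right.2
  constructor
  · by_cases hm : φ a = φ x₀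
    · have hconst : ∀ x ∈ Iic a, φ x = φ a := fun x hx =>
        le_antisymm (hφm hx) (hm ▸ hφmin x)
      exact (continuousWithinAt_const (b := φ a)).congr hconst (hconst a self_mem_Iic)
    · have hm' : φ x₀ < φ a := lt_of_le_of_ne (hφmin a) fun e => hm e.symm
      refine continuousWithinAt_left_of_monotoneOn_of_exists_between
        (hφm.monotoneOn _) univ_mem fun b hb => ?_
      have h1 : max b (φ x₀) < φ a := max_lt hb hm'
      obtain ⟨q, hq⟩ := hsurj ((max b (φ x₀) + φ a) / 2)
        (by have := le_max_right b (φ x₀); linarith)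
      refine ⟨q, mem_univ q, ?_⟩
      rw [hq]
      constructor
      · have := le_max_left b (φ x₀); linarith
      · linarith
  · refine continuousWithinAt_right_of_monotoneOn_of_exists_between
      (hφm.monotoneOn _) univ_mem fun b hb => ?_
    obtain ⟨q, hq⟩ := hsurj ((φ a + b) / 2) (by have := hφmin a; linarith)
    refine ⟨q, mem_univ q, ?_⟩
    rw [hq]
    constructor <;> linarith

lemma key_exists {N : ℕ} (hN : 1 ≤ N) (φ : Fin N → ℝ → ℝ)
    (hmono : ∀ α, Monotone (φ α)) (hcont : ∀ α, Continuous (φ α))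
    (x0 : Fin N → ℝ) (hminpt : ∀ α q, φ α (x0 α) ≤ φ α q)
    (hcoer : ∀ α M, ∃ R, ∀ q, R ≤ q → M ≤ φ α q)
    (F0 : (Fin N → ℝ) → ℝ) (hF0cont : Continuous F0) (hF0mono : Antitone F0)
    (hF0sc : IsSemiCoercive F0) :
    ∃ q : Fin N → ℝ, ∀ α, F0 q = φ α (q α) := by
  haveI : Nonempty (Fin N) := ⟨⟨0, hN⟩⟩
  obtain ⟨β, hβ⟩ := Finite.exists_max fun α => φ α (x0 α)
  set m := φ β (x0 β) with hmdef
  -- the "b" inverse (largest preimage)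
  set b : Fin N → ℝ → ℝ := fun α lam => sSup {x | φ α x ≤ lam} with hbdef
  have hSbne : ∀ α lam, m ≤ lam → x0 α ∈ {x | φ α x ≤ lam} := fun α lam hl =>
    le_trans (hβ α) hl
  have hSbbdd : ∀ α lam, BddAbove {x | φ α x ≤ lam} := by
    intro α lam
    obtain ⟨R, hR⟩ := hcoer α (lam + 1)
    refine ⟨R, fun x hx => ?_⟩
    by_contra hlt
    push_neg at hlt
    have := hR x hlt.le
    have hx' : φ α x ≤ lam := hx
    linarith
  have hSbcl : ∀ α lam, IsClosed {x | φ α x ≤ lam} := fun α lam =>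
    isClosed_Iic.preimage (hcont α)
  have hble : ∀ α lam x, φ α x ≤ lam → x ≤ b α lam := fun α lam x hx =>
    le_csSup (hSbbdd α lam) hx
  have hbmem : ∀ α lam, m ≤ lam → φ α (b α lam) ≤ lam := fun α lam hl =>
    (hSbcl α lam).csSup_mem ⟨_, hSbne α lam hl⟩ (hSbbdd α lam)
  have hbeq : ∀ α lam, m ≤ lam → φ α (b α lam) = lam := by
    intro α lam hl
    refine le_antisymm (hbmem α lam hl) ?_
    by_contra hlt
    push_neg at hlt
    have hU : φ α ⁻¹' Iio lam ∈ 𝓝 (b α lam) :=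
      (hcont α).continuousAt.preimage_mem_nhds (Iio_mem_nhds hlt)
    obtain ⟨δ, hδpos, hball⟩ := Metric.mem_nhds_iff.1 hU
    have hmem2 : φ α (b α lam + δ / 2) < lam := by
      apply hball
      rw [Metric.mem_ball, Real.dist_eq, add_sub_cancel_left, abs_of_pos (by linarith)]
      linarith
    have := hble α lam _ hmem2.le
    linarith
  -- the "a" inverse (smallest preimage)
  set a : Fin N → ℝ → ℝ := fun α lam => sInf {x | lam ≤ φ α x} with hadef
  have hSane : ∀ α lam, {x | lam ≤ φ α x}.Nonempty := by
    intro α lam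
    obtain ⟨R, hR⟩ := hcoer α lam
    exact ⟨R, hR R le_rfl⟩
  have hSabdd : ∀ α lam, m < lam → BddBelow {x | lam ≤ φ α x} := by
    intro α lam hl
    refine ⟨x0 α, fun x hx => ?_⟩
    by_contra hlt
    push_neg at hlt
    have h1 : φ α x ≤ φ α (x0 α) := hmono α hlt.le
    have h2 : φ α (x0 α) ≤ m := hβ α
    have hx' : lam ≤ φ α x := hx
    linarith
  have hSacl : ∀ α lam, IsClosed {x | lam ≤ φ α x} := fun α lam =>
    isClosed_Ici.preimage (hcont α)
  have hale : ∀ α lam x, m < lam → lam ≤ φ α x → a α lam ≤ x := fun α lam x hl hx =>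
    csInf_le (hSabdd α lam hl) hx
  have hamem : ∀ α lam, m < lam → lam ≤ φ α (a α lam) := fun α lam hl =>
    (hSacl α lam).csInf_mem (hSane α lam) (hSabdd α lam hl)
  have haeq : ∀ α lam, m < lam → φ α (a α lam) = lam := by
    intro α lam hl
    refine le_antisymm ?_ (hamem α lam hl)
    by_contra hgt
    push_neg at hgt
    have hU : φ α ⁻¹' Ioi lam ∈ 𝓝 (a α lam) :=
      (hcont α).continuousAt.preimage_mem_nhds (Ioi_mem_nhds hgt)
    obtain ⟨δ, hδpos, hball⟩ := Metric.mem_nhds_iff.1 hU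
    have hmem2 : lam < φ α (a α lam - δ / 2) := by
      apply hball
      rw [Metric.mem_ball, Real.dist_eq]
      rw [show a α lam - δ / 2 - a α lam = -(δ / 2) by ring, abs_neg,
        abs_of_pos (by linarith)]
      linarith
    have := hale α lam _ hl hmem2.le
    linarith
  have haleb : ∀ α lam, m < lam → a α lam ≤ b α lam := fun α lam hl =>
    hale α lam _ hl (hbeq α lam hl.le).ge
  have hblea : ∀ α lam lam', m ≤ lam → lam < lam' → b α lam ≤ a α lam' := by
    intro α lam lam' hl hll'
    refine csSup_le ⟨_, hSbne α lam hl⟩ fun x hx => ?_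
    by_contra hlt
    push_neg at hlt
    have h1 : φ α (a α lam') ≤ φ α x := hmono α hlt.le
    rw [haeq α lam' (lt_of_le_of_lt hl hll')] at h1
    have hx' : φ α x ≤ lam := hx
    linarith
  have hamono : ∀ α lam lam', m < lam → lam ≤ lam' → a α lam ≤ a α lam' := by
    intro α lam lam' hl hll'
    exact csInf_le_csInf (hSabdd α lam hl) (hSane α lam')
      fun x hx => le_trans hll' hx
  -- the candidate set of levels
  set S := {lam | m < lam ∧ lam ≤ F0 fun α => a α lam} with hSdef
  have hSbddA : BddAbove S := by
    refine ⟨max (m + 1) (F0 fun α => a α (m + 1)), fun lam hlam => ?_⟩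
    rcases le_total lam (m + 1) with hle | hle
    · exact hle.trans (le_max_left _ _)
    · refine le_trans ?_ (le_max_right _ _)
      calc lam ≤ F0 fun α => a α lam := hlam.2
        _ ≤ F0 fun α => a α (m + 1) :=
            hF0mono fun α => hamono α (m + 1) lam (by linarith) hle
  set lamstar := sSup (insert m S) with hlsdef
  have hbddInsert : BddAbove (insert m S) := hSbddA.insert m
  have hstar_ge : m ≤ lamstar := le_csSup hbddInsert (mem_insert m S)
  have hstar_ub : ∀ lam ∈ S, lam ≤ lamstar := fun lam hl =>
    le_csSup hbddInsert (mem_insert_of_mem _ hl)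
  -- limit helper
  have hseq0 : Tendsto (fun n : ℕ => 1 / ((n : ℝ) + 2)) atTop (𝓝 0) := by
    have h1 : Tendsto (fun n : ℕ => ((n : ℝ) + 2)) atTop atTop :=
      tendsto_atTop_add_const_right atTop 2 tendsto_natCast_atTop_atTop
    simpa [one_div, Pi.inv_def] using h1.inv_tendsto_atTop
  have htendu : Tendsto (fun n : ℕ => lamstar + 1 / ((n : ℝ) + 2)) atTop (𝓝 lamstar) := by
    simpa using tendsto_const_nhds.add hseq0
  have hpos2 : ∀ n : ℕ, (0 : ℝ) < 1 / ((n : ℝ) + 2) := by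
    intro n; positivity
  have hun : ∀ n : ℕ, m < lamstar + 1 / ((n : ℝ) + 2) := fun n =>
    lt_of_le_of_lt hstar_ge (by have := hpos2 n; linarith)
  -- C1 : F0 (b lamstar) ≤ lamstar
  have hC1 : (F0 fun α => b α lamstar) ≤ lamstar := by
    by_contra hgt
    push_neg at hgt
    have hkey : ∀ α, Tendsto (fun n : ℕ => a α (lamstar + 1 / ((n : ℝ) + 2))) atTop
        (𝓝 (b α lamstar)) := by
      intro α
      have hanti : Antitone fun n : ℕ => a α (lamstar + 1 / ((n : ℝ) + 2)) := by
        intro n n' hnn'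
        apply hamono α _ _ (hun n')
        have h2 : ((n : ℝ) + 2) ≤ ((n' : ℝ) + 2) := by
          have : (n : ℝ) ≤ (n' : ℝ) := Nat.cast_le.2 hnn'
          linarith
        have := one_div_le_one_div_of_le (by positivity : (0 : ℝ) < (n : ℝ) + 2) h2
        linarith
      have hbddb : BddBelow (range fun n : ℕ => a α (lamstar + 1 / ((n : ℝ) + 2))) := by
        refine ⟨b α lamstar, ?_⟩
        rintro x ⟨n, rfl⟩
        exact hblea α lamstar _ hstar_ge (by have := hpos2 n; linarith)
      have hlim := tendsto_atTop_ciInf hanti hbddb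
      set L := ⨅ n : ℕ, a α (lamstar + 1 / ((n : ℝ) + 2)) with hLdef
      have hφL : φ α L = lamstar := by
        have h1 : Tendsto (fun n : ℕ => φ α (a α (lamstar + 1 / ((n : ℝ) + 2)))) atTop
            (𝓝 (φ α L)) := ((hcont α).continuousAt.tendsto).comp hlim
        have h2 : (fun n : ℕ => φ α (a α (lamstar + 1 / ((n : ℝ) + 2)))) =
            fun n : ℕ => lamstar + 1 / ((n : ℝ) + 2) :=
          funext fun n => haeq α _ (hun n)
        rw [h2] at h1
        exact tendsto_nhds_unique h1 htendu
      have hLB : L = b α lamstar := by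
        refine le_antisymm (hble α lamstar L hφL.le) (le_ciInf fun n => ?_)
        exact hblea α lamstar _ hstar_ge (by have := hpos2 n; linarith)
      rwa [hLB] at hlim
    have hFa : Tendsto (fun n : ℕ => F0 fun α => a α (lamstar + 1 / ((n : ℝ) + 2))) atTop
        (𝓝 (F0 fun α => b α lamstar)) :=
      (hF0cont.continuousAt.tendsto).comp (tendsto_pi_nhds.2 hkey)
    have hdiff : Tendsto (fun n : ℕ =>
        (F0 fun α => a α (lamstar + 1 / ((n : ℝ) + 2))) - (lamstar + 1 / ((n : ℝ) + 2)))
        atTop (𝓝 ((F0 fun α => b α lamstar) - lamstar)) := hFa.sub htendu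
    have hev := (tendsto_order.1 hdiff).1 0 (by linarith)
    obtain ⟨n, hn⟩ := hev.exists
    have hmemS : lamstar + 1 / ((n : ℝ) + 2) ∈ S := ⟨hun n, by linarith⟩
    have := hstar_ub _ hmemS
    have := hpos2 n
    linarith
  rcases eq_or_lt_of_le hstar_ge with heq | hlt
  · -- λ* = m : use semi-coercivity and update path
    rw [← heq] at hC1
    obtain ⟨R, hR⟩ := hF0sc m
    set B := fun α => b α m with hBdef
    set t₀ := min R (b β m) with ht₀def
    have hcontG : Continuous fun t => F0 (Function.update B β t) := by
      apply hF0cont.comp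
      apply continuous_pi
      intro α
      by_cases hα : α = β
      · subst hα
        simp only [Function.update_self]
        exact continuous_id
      · simp only [Function.update_of_ne hα]
        exact continuous_const
    have ht0le : t₀ ≤ b β m := min_le_right _ _
    have hG1 : F0 (Function.update B β (b β m)) = F0 B := by
      have : Function.update B β (b β m) = B := Function.update_eq_self β B
      rw [this]
    have hG0 : m ≤ F0 (Function.update B β t₀) := by
      refine hR _ ⟨β, ?_⟩
      simp only [Function.update_self]
      exact min_le_left _ _
    have hmem : m ∈ Icc (F0 (Function.update B β (b β m))) (F0 (Function.update B β t₀)) := by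
      rw [hG1]
      exact ⟨hC1, hG0⟩
    obtain ⟨t, htI, hFt⟩ :=
      intermediate_value_Icc' ht0le hcontG.continuousOn hmem
    refine ⟨Function.update B β t, fun α => ?_⟩
    have hFt' : F0 (Function.update B β t) = m := hFt
    rw [hFt']
    by_cases hα : α = β
    · rw [hα]
      simp only [Function.update_self]
      have h1 : φ β t ≤ m := by
        calc φ β t ≤ φ β (b β m) := hmono β htI.2
          _ = m := hbeq β m le_rfl
      have h2 : m ≤ φ β t := hminpt β t
      exact le_antisymm h2 h1
    · simp only [Function.update_of_ne hα]
      exact (hbeq α m le_rfl).symm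
  · -- λ* > m : inf/sup preimages and the segment path
    set A := fun α => a α lamstar with hAdef
    have hC2 : lamstar ≤ F0 A := by
      set ε := lamstar - m with hεdef
      have hεpos : 0 < ε := by rw [hεdef]; linarith
      set v : ℕ → ℝ := fun n => lamstar - ε / ((n : ℝ) + 2) with hvdef
      have hvm : ∀ n, m < v n := by
        intro n
        have h2 : (2 : ℝ) ≤ (n : ℝ) + 2 := by
          have : (0 : ℝ) ≤ (n : ℝ) := Nat.cast_nonneg n
          linarith
        have h1 : ε / ((n : ℝ) + 2) ≤ ε / 2 :=
          div_le_div_of_nonneg_left hεpos.le two_pos h2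
        have : v n = lamstar - ε / ((n : ℝ) + 2) := rfl
        rw [this, hεdef] at *
        linarith
      have hvlt : ∀ n, v n < lamstar := by
        intro n
        have : 0 < ε / ((n : ℝ) + 2) := by positivity
        show lamstar - ε / ((n : ℝ) + 2) < lamstar
        linarith
      have hseqe : Tendsto (fun n : ℕ => ε / ((n : ℝ) + 2)) atTop (𝓝 0) := by
        have := hseq0.const_mul ε
        simpa [mul_one_div, div_eq_mul_inv] using this
      have htendv : Tendsto v atTop (𝓝 lamstar) := by
        have := tendsto_const_nhds (x := lamstar) (f := atTop (α := ℕ)) |>.sub hseqe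
        simpa using this
      have hμ : ∀ n : ℕ, ∃ μ ∈ insert m S, v n < μ := fun n =>
        exists_lt_of_lt_csSup ⟨m, mem_insert m S⟩ (hvlt n)
      choose μ hμmem hμgt using hμ
      have hμS : ∀ n, μ n ∈ S := by
        intro n
        rcases mem_insert_iff.1 (hμmem n) with heq' | hS
        · exfalso
          have := hμgt n
          rw [heq'] at this
          exact absurd this (not_lt.2 (hvm n).le)
        · exact hS
      have hkey2 : ∀ n, v n ≤ F0 fun α => a α (v n) := by
        intro n
        have h1 := (hμS n).2
        have h2 : (F0 fun α => a α (μ n)) ≤ F0 fun α => a α (v n) :=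
          hF0mono fun α => hamono α _ _ (hvm n) (hμgt n).le
        have := hμgt n
        linarith
      have hkey3 : ∀ α, Tendsto (fun n => a α (v n)) atTop (𝓝 (A α)) := by
        intro α
        have hmonoSeq : Monotone fun n : ℕ => a α (v n) := by
          intro n n' hnn'
          apply hamono α _ _ (hvm n)
          have h2 : ((n : ℝ) + 2) ≤ ((n' : ℝ) + 2) := by
            have : (n : ℝ) ≤ (n' : ℝ) := Nat.cast_le.2 hnn'
            linarith
          have h3 : ε / ((n' : ℝ) + 2) ≤ ε / ((n : ℝ) + 2) :=
            div_le_div_of_nonneg_left hεpos.le (by positivity) h2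
          show lamstar - ε / ((n : ℝ) + 2) ≤ lamstar - ε / ((n' : ℝ) + 2)
          linarith
        have hbddb : BddAbove (range fun n : ℕ => a α (v n)) := by
          refine ⟨A α, ?_⟩
          rintro x ⟨n, rfl⟩
          exact hamono α _ _ (hvm n) (hvlt n).le
        have hlim := tendsto_atTop_ciSup hmonoSeq hbddb
        set L := ⨆ n : ℕ, a α (v n) with hLdef
        have hφL : φ α L = lamstar := by
          have h1 : Tendsto (fun n : ℕ => φ α (a α (v n))) atTop (𝓝 (φ α L)) :=
            ((hcont α).continuousAt.tendsto).comp hlim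
          have h2 : (fun n : ℕ => φ α (a α (v n))) = v :=
            funext fun n => haeq α _ (hvm n)
          rw [h2] at h1
          exact tendsto_nhds_unique h1 htendv
        have hLA : L = A α := by
          refine le_antisymm (ciSup_le fun n => hamono α _ _ (hvm n) (hvlt n).le) ?_
          exact hale α lamstar _ hlt hφL.ge
        rwa [hLA] at hlim
      exact le_of_tendsto_of_tendsto' htendv
        ((hF0cont.continuousAt.tendsto).comp (tendsto_pi_nhds.2 hkey3)) hkey2
    set B := fun α => b α lamstar with hBdef
    have hAB : ∀ α, A α ≤ B α := fun α => haleb α lamstar hlt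
    have hφA : ∀ α, φ α (A α) = lamstar := fun α => haeq α lamstar hlt
    have hφB : ∀ α, φ α (B α) = lamstar := fun α => hbeq α lamstar hstar_ge
    have hcontG : Continuous fun t : ℝ => F0 fun α => A α + t * (B α - A α) :=
      hF0cont.comp (continuous_pi fun α =>
        continuous_const.add (continuous_id.mul continuous_const))
    have h0 : (fun α => A α + (0 : ℝ) * (B α - A α)) = A := funext fun α => by ring
    have h1 : (fun α => A α + (1 : ℝ) * (B α - A α)) = B := funext fun α => by ring
    have hmem : lamstar ∈ Icc (F0 fun α => A α + (1 : ℝ) * (B α - A α))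
        (F0 fun α => A α + (0 : ℝ) * (B α - A α)) := by
      rw [h0, h1]
      exact ⟨hC1, hC2⟩
    obtain ⟨t, htI, hFt⟩ :=
      intermediate_value_Icc' zero_le_one hcontG.continuousOn hmem
    refine ⟨fun α => A α + t * (B α - A α), fun α => ?_⟩
    have hFt' : (F0 fun α => A α + t * (B α - A α)) = lamstar := hFt
    rw [hFt']
    have hBA : 0 ≤ B α - A α := by have := hAB α; linarith
    have hq1 : A α ≤ A α + t * (B α - A α) := by nlinarith [htI.1, htI.2]
    have hq2 : A α + t * (B α - A α) ≤ B α := by nlinarith [htI.1, htI.2]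
    have hle1 : lamstar ≤ φ α (A α + t * (B α - A α)) := by
      rw [← hφA α]; exact hmono α hq1
    have hle2 : φ α (A α + t * (B α - A α)) ≤ lamstar := by
      rw [← hφB α]; exact hmono α hq2
    exact le_antisymm hle1 hle2

end Aux

theorem godunov_relaxation_well_defined
    (N : ℕ) (hN : 1 ≤ N)
    (H : Fin N → ℝ → ℝ)
    (hHcont : ∀ α, Continuous (H α))
    (hHcoer : ∀ α, CoerciveHam (H α))
    (F0 : (Fin N → ℝ) → ℝ)
    (hF0cont : Continuous F0)
    (hF0mono : Antitone F0)
    (hF0sc : IsSemiCoercive F0) :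
    ∀ p : Fin N → ℝ,
      (∃ q : Fin N → ℝ, ∀ α, F0 q = godunov (H α) (q α) (p α)) ∧
      (∀ q₁ q₂ : Fin N → ℝ,
        (∀ α, F0 q₁ = godunov (H α) (q₁ α) (p α)) →
        (∀ α, F0 q₂ = godunov (H α) (q₂ α) (p α)) →
        F0 q₁ = F0 q₂) := by
  intro p
  have hmonog : ∀ α, Monotone fun q => godunov (H α) q (p α) := fun α =>
    godunov_mono (hHcont α) (p α)
  constructor
  · -- existence
    have hex : ∀ α : Fin N, ∃ x₀, x₀ ≤ p α ∧ ∀ x ≤ p α, H α x₀ ≤ H α x := fun α =>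
      exists_min_on_Iic (hHcont α) (hHcoer α) (p α)
    choose x0 hx0le hx0min using hex
    have hφmin : ∀ α q, godunov (H α) (x0 α) (p α) ≤ godunov (H α) q (p α) := by
      intro α q
      rw [godunov_at_min (hHcont α) (hx0le α) (hx0min α)]
      exact godunov_ge_min (hHcont α) (hx0le α) (hx0min α) q
    exact key_exists hN (fun α q => godunov (H α) q (p α)) hmonog
      (fun α => godunov_cont (hHcont α) (hHcoer α) (hx0le α) (hx0min α))
      x0 hφmin (fun α => godunov_coer (hHcont α) (hHcoer α) (p α))
      F0 hF0cont hF0mono hF0sc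
  · -- uniqueness of the value
    intro q₁ q₂ h1 h2
    have haux : ∀ r s : Fin N → ℝ,
        (∀ α, F0 r = godunov (H α) (r α) (p α)) →
        (∀ α, F0 s = godunov (H α) (s α) (p α)) →
        F0 r < F0 s → False := by
      intro r s hr hs hrs
      have hle : ∀ α, r α ≤ s α := by
        intro α
        by_contra hgt
        push_neg at hgt
        have h3 : godunov (H α) (s α) (p α) ≤ godunov (H α) (r α) (p α) :=
          hmonog α hgt.le
        rw [← hr α, ← hs α] at h3
        linarith
      exact absurd (hF0mono hle) (not_le.2 hrs)
    rcases lt_trichotomy (F0 q₁) (F0 q₂) with hlt | heq | hlt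
    · exact (haux q₁ q₂ h1 h2 hlt).elim
    · exact heq
    · exact (haux q₂ q₁ h2 h1 hlt).elim
end
end

section
/- Suppose F_0 is semi-coercive. Then for every p ∈ ℝ^N: (i) there exists q ∈ ℝ^N satisfying the lower Godunov relation for F_0 at p (in particular any such q satisfies q ≥ p componentwise); (ii) if q_1 and q_2 both satisfy the lower Godunov relation for F_0 at p, then F_0(q_1) = F_0(q_2). (The common value defines the lower Godunov relaxation (F_0 G̲)(p).) -/
open Set

noncomputable section

namespace LGaux

/-- sublevel set of running max -/
def Slev (h : ℝ → ℝ) (a lam : ℝ) : Set ℝ :=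
  {t | a ≤ t ∧ sSup (h '' Icc a t) ≤ lam}

/-- the candidate point at level lam -/
noncomputable def qf (h : ℝ → ℝ) (a lam : ℝ) : ℝ :=
  if h a ≤ lam then sSup (Slev h a lam) else a

variable {h : ℝ → ℝ} {a b lam lam' : ℝ}

lemma sSup_mem (hc : Continuous h) (hab : a ≤ b) :
    sSup (h '' Icc a b) ∈ h '' Icc a b :=
  (isCompact_Icc.image hc).sSup_mem ((nonempty_Icc.2 hab).image h)

lemma le_G (hc : Continuous h) {x : ℝ} (hx : x ∈ Icc a b) :
    h x ≤ sSup (h '' Icc a b) :=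
  le_csSup (isCompact_Icc.image hc).bddAbove (mem_image_of_mem h hx)

lemma G_self : sSup (h '' Icc a a) = h a := by
  rw [Icc_self, image_singleton, csSup_singleton]

lemma G_mono (hc : Continuous h) (hab : a ≤ b) (hbb : b ≤ b') :
    sSup (h '' Icc a b) ≤ sSup (h '' Icc a b') := by
  apply csSup_le ((nonempty_Icc.2 hab).image h)
  rintro x ⟨y, hy, rfl⟩
  exact le_G hc ⟨hy.1, hy.2.trans hbb⟩

lemma Slev_bdd (hc : Continuous h) (hco : CoerciveHam h) : BddAbove (Slev h a lam) := by
  obtain ⟨R, hR⟩ := hco (lam + 1)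
  refine ⟨max R |a|, fun t ht => ?_⟩
  by_contra hgt
  push_neg at hgt
  have h1 : R ≤ |t| := by
    have : (0:ℝ) ≤ t := le_trans (abs_nonneg a) (le_of_lt ((le_max_right _ _).trans_lt hgt))
    rw [abs_of_nonneg this]
    exact le_of_lt ((le_max_left _ _).trans_lt hgt)
  have h2 : lam + 1 ≤ h t := hR t h1
  have h3 : h t ≤ lam := le_trans (le_G hc ⟨ht.1, le_refl t⟩) ht.2
  linarith

lemma Slev_mem_self (hle : h a ≤ lam) : a ∈ Slev h a lam :=
  ⟨le_refl a, by rw [G_self]; exact hle⟩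

/-- if the running max up to b is < lam, it stays < lam slightly beyond b -/
lemma exists_gt_G_lt (hc : Continuous h) (hab : a ≤ b)
    (hlt : sSup (h '' Icc a b) < lam) : ∃ c, b < c ∧ sSup (h '' Icc a c) < lam := by
  have hb : h b < lam := lt_of_le_of_lt (le_G hc ⟨hab, le_refl b⟩) hlt
  obtain ⟨δ, hδ, hδ2⟩ := Metric.continuousAt_iff.1 hc.continuousAt (lam - h b) (by linarith)
  refine ⟨b + δ/2, by linarith, ?_⟩
  have key : ∀ x ∈ Icc a (b + δ/2), h x < lam := by
    intro x hx
    rcases le_or_gt x b with hxb | hxb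
    · exact lt_of_le_of_lt (le_G hc ⟨hx.1, hxb⟩) hlt
    · have : dist x b < δ := by
        rw [Real.dist_eq, abs_of_pos (by linarith)]
        linarith [hx.2]
      have := hδ2 this
      rw [Real.dist_eq] at this
      have := abs_lt.1 this
      linarith [this.1, this.2]
  obtain ⟨x, hx, hxe⟩ := sSup_mem hc (by linarith : a ≤ b + δ/2)
  rw [← hxe]
  exact key x hx

lemma G_qf_le (hc : Continuous h) (hco : CoerciveHam h) (hle : h a ≤ lam) :
    sSup (h '' Icc a (sSup (Slev h a lam))) ≤ lam := by
  set q := sSup (Slev h a lam) with hq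
  have hne : (Slev h a lam).Nonempty := ⟨a, Slev_mem_self hle⟩
  have haq : a ≤ q := le_csSup (Slev_bdd hc hco) (Slev_mem_self hle)
  by_contra hgt
  push_neg at hgt
  obtain ⟨x, hx, hxe⟩ := sSup_mem hc haq
  -- every element of Slev is < x
  have hlt : ∀ t ∈ Slev h a lam, t < x := by
    intro t ht
    by_contra hge
    push_neg at hge
    have : h x ≤ lam := le_trans (le_G hc ⟨hx.1, hge⟩) ht.2
    rw [hxe] at this; linarith
  have hqx : q ≤ x := csSup_le hne (fun t ht => le_of_lt (hlt t ht))
  have hxq : x = q := le_antisymm hx.2 hqx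
  have hhx : lam < h x := by rw [hxe]; exact hgt
  obtain ⟨δ, hδ, hδ2⟩ := Metric.continuousAt_iff.1 hc.continuousAt (h x - lam) (by linarith)
  obtain ⟨t, ht, htgt⟩ := exists_lt_of_lt_csSup hne (by linarith [hxq] : q - δ/2 < q)
  have hdist : dist t x < δ := by
    rw [Real.dist_eq, hxq]
    rw [abs_of_nonpos (by linarith [le_csSup (Slev_bdd hc hco) ht])]
    have : t ≤ q := le_csSup (Slev_bdd hc hco) ht
    linarith
  have := hδ2 hdist
  rw [Real.dist_eq] at this
  have habs := abs_lt.1 this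
  have : lam < h t := by linarith [habs.1, habs.2]
  have : h t ≤ lam := le_trans (le_G hc ⟨ht.1, le_refl t⟩) ht.2
  linarith

lemma G_qf_ge (hc : Continuous h) (hco : CoerciveHam h) (hle : h a ≤ lam) :
    lam ≤ sSup (h '' Icc a (sSup (Slev h a lam))) := by
  set q := sSup (Slev h a lam) with hq
  have haq : a ≤ q := le_csSup (Slev_bdd hc hco) (Slev_mem_self hle)
  by_contra hgt
  push_neg at hgt
  obtain ⟨c, hc1, hc2⟩ := exists_gt_G_lt hc haq hgt
  have : c ∈ Slev h a lam := ⟨by linarith, le_of_lt hc2⟩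
  have := le_csSup (Slev_bdd hc hco) this
  linarith

lemma qf_ge (hc : Continuous h) (hco : CoerciveHam h) : a ≤ qf h a lam := by
  unfold qf
  split_ifs with hif
  · exact le_csSup (Slev_bdd hc hco) (Slev_mem_self hif)
  · exact le_refl a

lemma qf_mono (hc : Continuous h) (hco : CoerciveHam h) (hll : lam ≤ lam') :
    qf h a lam ≤ qf h a lam' := by
  unfold qf
  split_ifs with h1 h2 h2
  · exact csSup_le_csSup (Slev_bdd hc hco) ⟨a, Slev_mem_self h1⟩
      (fun t ht => ⟨ht.1, ht.2.trans hll⟩)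
  · exact absurd (h1.trans hll) h2
  · exact le_csSup (Slev_bdd hc hco) (Slev_mem_self h2)
  · exact le_refl a

lemma qf_gt (hc : Continuous h) (hco : CoerciveHam h) (hlt : h a < lam) :
    a < qf h a lam := by
  obtain ⟨c, hc1, hc2⟩ := exists_gt_G_lt hc (le_refl a) (by rw [G_self]; exact hlt)
  have hmem : c ∈ Slev h a lam := ⟨le_of_lt hc1, le_of_lt hc2⟩
  have := le_csSup (Slev_bdd hc hco) hmem
  unfold qf
  rw [if_pos (le_of_lt hlt)]
  linarith

lemma G_qf_eq (hc : Continuous h) (hco : CoerciveHam h) (hle : h a ≤ lam) :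
    sSup (h '' Icc a (qf h a lam)) = lam := by
  unfold qf
  rw [if_pos hle]
  exact le_antisymm (G_qf_le hc hco hle) (G_qf_ge hc hco hle)

lemma mem_le_qf (hc : Continuous h) (hco : CoerciveHam h) (hle : h a ≤ lam)
    {t : ℝ} (ht : t ∈ Slev h a lam) : t ≤ qf h a lam := by
  unfold qf
  rw [if_pos hle]
  exact le_csSup (Slev_bdd hc hco) ht

end LGaux


section LGmain

open LGaux

/-- Two points satisfying the lower Godunov relation cannot have strictly ordered values. -/
lemma lower_godunov_value_not_lt
    {N : ℕ} (H : Fin N → ℝ → ℝ) (hHcont : ∀ α, Continuous (H α))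
    (F0 : (Fin N → ℝ) → ℝ) (hF0mono : Antitone F0)
    (p q₁ q₂ : Fin N → ℝ)
    (h₁ : LowerGodunovRel H F0 p q₁) (h₂ : LowerGodunovRel H F0 p q₂)
    (hlt : F0 q₁ < F0 q₂) : False := by
  have hα : ∃ α, q₂ α < q₁ α := by
    by_contra hcon
    push_neg at hcon
    exact absurd (hF0mono (fun α => hcon α)) (not_le.2 hlt)
  obtain ⟨α, hαlt⟩ := hα
  have hq2p : p α ≤ q₂ α := by
    rcases h₂ α with ⟨he, _⟩ | ⟨hl, _⟩
    · exact he.ge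
    · exact hl.le
  rcases h₁ α with ⟨he1, _⟩ | ⟨hl1, hv1⟩
  · exact absurd (hαlt.trans_le he1.le) (not_lt.2 hq2p)
  · rcases h₂ α with ⟨he2, hv2⟩ | ⟨hl2, hv2⟩
    · have : H α (p α) ≤ F0 q₁ := by
        rw [hv1]
        exact le_G (hHcont α) ⟨le_refl _, hl1.le⟩
      linarith
    · have : F0 q₂ ≤ F0 q₁ := by
        rw [hv1, hv2]
        exact G_mono (hHcont α) hl2.le hαlt.le
      linarith


lemma lower_godunov_exists
    {N : ℕ} (H : Fin N → ℝ → ℝ) (hHcont : ∀ α, Continuous (H α))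
    (hHcoer : ∀ α, CoerciveHam (H α))
    (F0 : (Fin N → ℝ) → ℝ) (hF0cont : Continuous F0) (hF0mono : Antitone F0)
    (p : Fin N → ℝ) : ∃ q, LowerGodunovRel H F0 p q := by
  classical
  set Q : ℝ → (Fin N → ℝ) := fun lam α => qf (H α) (p α) lam with hQ
  set Φ : ℝ → ℝ := fun lam => F0 (Q lam) with hΦ
  have hQmono : ∀ ⦃l l' : ℝ⦄, l ≤ l' → Q l ≤ Q l' :=
    fun l l' hll α => qf_mono (hHcont α) (hHcoer α) hll
  have hΦanti : Antitone Φ := fun l l' hll => hF0mono (hQmono hll)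
  set S : Set ℝ := {lam | Φ lam ≤ lam} with hS
  have hSne : S.Nonempty := by
    refine ⟨max 0 (Φ 0), ?_⟩
    exact le_trans (hΦanti (le_max_left _ _)) (le_max_right _ _)
  have hSbdd : BddBelow S := by
    refine ⟨min 0 (Φ 0), fun lam hlam => ?_⟩
    by_contra hcon
    push_neg at hcon
    have h1 : lam < 0 := hcon.trans_le (min_le_left _ _)
    have h2 : lam < Φ 0 := hcon.trans_le (min_le_right _ _)
    have := hΦanti h1.le
    exact absurd hlam (not_le.2 (lt_of_lt_of_le h2 this))
  set lam₀ : ℝ := sInf S with hlam₀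
  have hub : ∀ lam, lam₀ < lam → Φ lam ≤ lam := by
    intro lam hlam
    obtain ⟨μ, hμS, hμlt⟩ := exists_lt_of_csInf_lt hSne hlam
    exact le_trans (le_trans (hΦanti hμlt.le) hμS) hμlt.le
  have hlb : ∀ lam, lam < lam₀ → lam < Φ lam := by
    intro lam hlam
    by_contra hcon
    push_neg at hcon
    exact absurd (csInf_le hSbdd hcon) (not_le.2 hlam)
  -- sequences approaching lam₀ from above and below
  set lamn : ℕ → ℝ := fun n => lam₀ + 1/(n+1) with hlamn
  set mun : ℕ → ℝ := fun n => lam₀ - 1/(n+1) with hmun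
  have hfrac : ∀ n : ℕ, (0:ℝ) < 1/(n+1) := by intro n; positivity
  have hfracmono : ∀ ⦃m n : ℕ⦄, m ≤ n → (1:ℝ)/(n+1) ≤ 1/(m+1) := by
    intro m n hmn
    apply one_div_le_one_div_of_le (by positivity)
    have : (m:ℝ) ≤ n := Nat.cast_le.2 hmn
    linarith
  have hlamanti : Antitone lamn := fun m n hmn => by
    simp only [hlamn]; linarith [hfracmono hmn]
  have hmumono : Monotone mun := fun m n hmn => by
    simp only [hmun]; linarith [hfracmono hmn]
  have hlamgt : ∀ n, lam₀ < lamn n := fun n => by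
    simp only [hlamn]; linarith [hfrac n]
  have hmult : ∀ n, mun n < lam₀ := fun n => by
    simp only [hmun]; linarith [hfrac n]
  have hfrac0 : Filter.Tendsto (fun n : ℕ => 1/((n:ℝ)+1)) Filter.atTop (nhds 0) :=
    tendsto_one_div_add_atTop_nhds_zero_nat
  have hlamtend : Filter.Tendsto lamn Filter.atTop (nhds lam₀) := by
    have := Filter.Tendsto.add
      (tendsto_const_nhds : Filter.Tendsto (fun _ : ℕ => lam₀) Filter.atTop (nhds lam₀)) hfrac0
    simpa [hlamn, hmun, one_div] using this
  have hmutend : Filter.Tendsto mun Filter.atTop (nhds lam₀) := by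
    have := Filter.Tendsto.sub
      (tendsto_const_nhds : Filter.Tendsto (fun _ : ℕ => lam₀) Filter.atTop (nhds lam₀)) hfrac0
    simpa [hlamn, hmun, one_div] using this
  set b : Fin N → ℝ := Q lam₀ with hb
  set c : Fin N → ℝ := fun α => ⨆ n, Q (mun n) α with hc
  have hQmu_le_b : ∀ n α, Q (mun n) α ≤ b α := fun n α => hQmono (hmult n).le α
  have hc_le_b : ∀ α, c α ≤ b α := fun α => ciSup_le (fun n => hQmu_le_b n α)
  have hp_le_Q : ∀ lam α, p α ≤ Q lam α := fun lam α => qf_ge (hHcont α) (hHcoer α)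
  have hcbdd : ∀ α, BddAbove (range fun n => Q (mun n) α) := by
    intro α; exact ⟨b α, by rintro x ⟨n, rfl⟩; exact hQmu_le_b n α⟩
  have hp_le_c : ∀ α, p α ≤ c α :=
    fun α => (hp_le_Q (mun 0) α).trans (le_ciSup (hcbdd α) 0)
  -- convergence of Q (mun n) to c
  have hctend : Filter.Tendsto (fun n => Q (mun n)) Filter.atTop (nhds c) := by
    rw [tendsto_pi_nhds]
    intro α
    exact tendsto_atTop_ciSup (fun m n hmn => hQmono (hmumono hmn) α) (hcbdd α)
  -- convergence of Q (lamn n) to b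
  have hbbdd : ∀ α, BddBelow (range fun n => Q (lamn n) α) := by
    intro α; exact ⟨p α, by rintro x ⟨n, rfl⟩; exact hp_le_Q _ α⟩
  have hinf : ∀ α, (⨅ n, Q (lamn n) α) = b α := by
    intro α
    apply le_antisymm
    · rcases le_or_gt (H α (p α)) lam₀ with hle | hgt
      · -- the infimum is in the sublevel set at lam₀
        have hd_ge : p α ≤ ⨅ n, Q (lamn n) α := le_ciInf (fun n => hp_le_Q _ α)
        have hGd : sSup (H α '' Icc (p α) (⨅ n, Q (lamn n) α)) ≤ lam₀ := by
          apply le_of_forall_pos_le_add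
          intro ε hε
          obtain ⟨n, hn⟩ := exists_nat_one_div_lt hε
          have h1 : (⨅ m, Q (lamn m) α) ≤ Q (lamn n) α := ciInf_le (hbbdd α) n
          have h2 : sSup (H α '' Icc (p α) (Q (lamn n) α)) = lamn n :=
            G_qf_eq (hHcont α) (hHcoer α) (hle.trans (hlamgt n).le)
          calc sSup (H α '' Icc (p α) (⨅ m, Q (lamn m) α))
              ≤ sSup (H α '' Icc (p α) (Q (lamn n) α)) := G_mono (hHcont α) hd_ge h1
            _ = lamn n := h2
            _ ≤ lam₀ + ε := by simp only [hlamn]; push_cast; linarith [hn]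
        exact mem_le_qf (hHcont α) (hHcoer α) hle ⟨hd_ge, hGd⟩
      · -- b α = p α in this case
        have hbp : b α = p α := by
          show qf (H α) (p α) lam₀ = p α
          unfold qf
          rw [if_neg (not_le.2 hgt)]
        obtain ⟨n, hn⟩ := exists_nat_one_div_lt (sub_pos.2 hgt)
        have hQn : Q (lamn n) α = p α := by
          show qf (H α) (p α) (lamn n) = p α
          unfold qf
          rw [if_neg]
          push_neg
          simp only [hlamn]
          push_cast at hn ⊢
          linarith
        rw [hbp, ← hQn]
        exact ciInf_le (hbbdd α) n
    · exact le_ciInf (fun n => hQmono (hlamgt n).le α)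
  have hbtend : Filter.Tendsto (fun n => Q (lamn n)) Filter.atTop (nhds b) := by
    rw [tendsto_pi_nhds]
    intro α
    have := tendsto_atTop_ciInf (fun m n hmn => hQmono (hlamanti hmn) α) (hbbdd α)
    rwa [hinf α] at this
  -- F0 b ≤ lam₀ ≤ F0 c
  have hF0b : F0 b ≤ lam₀ := by
    refine le_of_tendsto_of_tendsto' ((hF0cont.tendsto b).comp hbtend) hlamtend ?_
    intro n
    exact hub (lamn n) (hlamgt n)
  have hF0c : lam₀ ≤ F0 c := by
    refine le_of_tendsto_of_tendsto' hmutend ((hF0cont.tendsto c).comp hctend) ?_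
    intro n
    exact (hlb (mun n) (hmult n)).le
  -- intermediate value along the segment from c to b
  set g : ℝ → ℝ := fun s => F0 (fun α => c α + s * (b α - c α)) with hg
  have hgcont : Continuous g := by
    apply hF0cont.comp
    exact continuous_pi (fun α => continuous_const.add (continuous_id.mul continuous_const))
  have hg0 : g 0 = F0 c := by simp [hg]
  have hg1 : g 1 = F0 b := by
    simp only [hg]
    congr 1
    funext α
    ring
  have hmem : lam₀ ∈ Icc (g 1) (g 0) := by
    rw [hg0, hg1]; exact ⟨hF0b, hF0c⟩
  obtain ⟨s, hs01, hgs⟩ := intermediate_value_Icc' zero_le_one hgcont.continuousOn hmem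
  set q : Fin N → ℝ := fun α => c α + s * (b α - c α) with hq
  have hF0q : F0 q = lam₀ := hgs
  have hq_ge_c : ∀ α, c α ≤ q α := by
    intro α
    have := hc_le_b α
    simp only [hq]
    nlinarith [hs01.1]
  have hq_le_b : ∀ α, q α ≤ b α := by
    intro α
    have := hc_le_b α
    simp only [hq]
    nlinarith [hs01.2]
  have hq_ge_p : ∀ α, p α ≤ q α := fun α => (hp_le_c α).trans (hq_ge_c α)
  refine ⟨q, fun α => ?_⟩
  rcases le_or_gt (H α (p α)) lam₀ with hle | hgt
  · have hGb : sSup (H α '' Icc (p α) (b α)) = lam₀ :=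
      G_qf_eq (hHcont α) (hHcoer α) hle
    rcases eq_or_lt_of_le (hq_ge_p α) with heq | hlt
    · left
      refine ⟨heq.symm, ?_⟩
      rw [hF0q]
      -- show lam₀ ≤ H α (p α)
      by_contra hcon
      push_neg at hcon
      obtain ⟨n, hn⟩ := exists_nat_one_div_lt (sub_pos.2 hcon)
      have hmu_gt : H α (p α) < mun n := by
        simp only [hmun]; push_cast at hn ⊢; linarith
      have h1 : p α < Q (mun n) α := qf_gt (hHcont α) (hHcoer α) hmu_gt
      have h2 : Q (mun n) α ≤ c α := le_ciSup (hcbdd α) n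
      have := h2.trans (hq_ge_c α)
      rw [← heq] at this
      linarith
    · right
      refine ⟨hlt, ?_⟩
      rw [hF0q]
      apply le_antisymm
      · -- lam₀ ≤ sSup ...
        rcases eq_or_lt_of_le hle with heq2 | hlt2
        · calc lam₀ = H α (p α) := heq2.symm
            _ ≤ sSup (H α '' Icc (p α) (q α)) := le_G (hHcont α) ⟨le_refl _, hlt.le⟩
        · apply le_of_forall_pos_le_add
          intro ε hε
          obtain ⟨n, hn⟩ := exists_nat_one_div_lt (lt_min hε (sub_pos.2 hlt2))
          have hn1 : (1:ℝ)/(n+1) < ε := hn.trans_le (min_le_left _ _)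
          have hn2 : (1:ℝ)/(n+1) < lam₀ - H α (p α) := hn.trans_le (min_le_right _ _)
          have hmu_ge : H α (p α) ≤ mun n := by
            simp only [hmun]; push_cast at hn2 ⊢; linarith
          have h2 : Q (mun n) α ≤ q α := (le_ciSup (hcbdd α) n).trans (hq_ge_c α)
          have h3 : sSup (H α '' Icc (p α) (Q (mun n) α)) = mun n :=
            G_qf_eq (hHcont α) (hHcoer α) hmu_ge
          calc lam₀ ≤ mun n + ε := by simp only [hmun]; push_cast at hn1 ⊢; linarith
            _ = sSup (H α '' Icc (p α) (Q (mun n) α)) + ε := by rw [h3]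
            _ ≤ sSup (H α '' Icc (p α) (q α)) + ε := by
                have := G_mono (hHcont α) (hp_le_Q (mun n) α) h2
                linarith
      · rw [← hGb]
        exact G_mono (hHcont α) (hq_ge_p α) (hq_le_b α)
  · left
    have hbp : b α = p α := by
      show qf (H α) (p α) lam₀ = p α
      unfold qf
      rw [if_neg (not_le.2 hgt)]
    have hqp : q α = p α :=
      le_antisymm (by rw [← hbp]; exact hq_le_b α) (hq_ge_p α)
    exact ⟨hqp, by rw [hF0q]; exact hgt.le⟩

end LGmain

theorem lower_godunov_relaxation_well_defined
    (N : ℕ) (hN : 1 ≤ N)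
    (H : Fin N → ℝ → ℝ)
    (hHcont : ∀ α, Continuous (H α))
    (hHcoer : ∀ α, CoerciveHam (H α))
    (F0 : (Fin N → ℝ) → ℝ)
    (hF0cont : Continuous F0)
    (hF0mono : Antitone F0)
    (hF0sc : IsSemiCoercive F0) :
    ∀ p : Fin N → ℝ,
      (∃ q : Fin N → ℝ, LowerGodunovRel H F0 p q) ∧
      (∀ q : Fin N → ℝ, LowerGodunovRel H F0 p q → p ≤ q) ∧
      (∀ q₁ q₂ : Fin N → ℝ,
        LowerGodunovRel H F0 p q₁ → LowerGodunovRel H F0 p q₂ → F0 q₁ = F0 q₂) := by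
  intro p
  refine ⟨lower_godunov_exists H hHcont hHcoer F0 hF0cont hF0mono p, ?_, ?_⟩
  · intro q hq α
    rcases hq α with ⟨he, _⟩ | ⟨hl, _⟩
    · exact he.ge
    · exact hl.le
  · intro q₁ q₂ h₁ h₂
    by_contra hne
    rcases lt_or_gt_of_ne hne with hlt | hlt
    · exact lower_godunov_value_not_lt H hHcont F0 hF0mono p q₁ q₂ h₁ h₂ hlt
    · exact lower_godunov_value_not_lt H hHcont F0 hF0mono p q₂ q₁ h₂ h₁ hlt
end
end

section
/- Suppose F_0 is semi-coercive. Then for every p ∈ ℝ^N: (i) there exists q ∈ ℝ^N satisfying the upper Godunov relation for F_0 at p (in particular any such q satisfies q ≤ p componentwise); (ii) if q_1 and q_2 both satisfy the upper Godunov relation for F_0 at p, then F_0(q_1) = F_0(q_2). (The common value defines the upper Godunov relaxation (F_0 Ḡ)(p).) -/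
open Set

noncomputable section

section helpers

variable {h : ℝ → ℝ}

lemma infIcc_le (hc : Continuous h) {r b u : ℝ} (hu : u ∈ Icc r b) :
    sInf (h '' Icc r b) ≤ h u :=
  csInf_le ((isCompact_Icc.image hc).bddBelow) ⟨u, hu, rfl⟩

lemma infIcc_attain (hc : Continuous h) {r b : ℝ} (hrb : r ≤ b) :
    ∃ s ∈ Icc r b, sInf (h '' Icc r b) = h s := by
  obtain ⟨s, hs, hmin⟩ := isCompact_Icc.exists_isMinOn (nonempty_Icc.mpr hrb) hc.continuousOn
  refine ⟨s, hs, le_antisymm (infIcc_le hc hs) (le_csInf ⟨h s, ⟨s, hs, rfl⟩⟩ ?_)⟩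
  rintro _ ⟨u, hu, rfl⟩
  exact isMinOn_iff.mp hmin u hu

lemma infIcc_mono (hc : Continuous h) {r r' b : ℝ} (h1 : r ≤ r') (h2 : r' ≤ b) :
    sInf (h '' Icc r b) ≤ sInf (h '' Icc r' b) :=
  csInf_le_csInf ((isCompact_Icc.image hc).bddBelow)
    ((nonempty_Icc.mpr h2).image h) (image_mono (f := h) (Icc_subset_Icc_left h1))

lemma infIcc_self (h : ℝ → ℝ) (b : ℝ) : sInf (h '' Icc b b) = h b := by
  rw [Icc_self, image_singleton, csInf_singleton]

lemma infIcc_continuousOn (hc : Continuous h) (b : ℝ) :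
    ContinuousOn (fun r => sInf (h '' Icc r b)) (Iic b) := by
  intro r₀ hr₀
  have hr₀b : r₀ ≤ b := hr₀
  rw [Metric.continuousWithinAt_iff]
  intro ε hε
  obtain ⟨s₀, hs₀, hs₀eq⟩ := infIcc_attain hc hr₀b
  obtain ⟨δ₁, hδ₁pos, hδ₁⟩ := Metric.continuousAt_iff.mp (hc.continuousAt (x := r₀)) ε hε
  obtain ⟨δ₂, hδ₂pos, hδ₂⟩ := Metric.continuousAt_iff.mp (hc.continuousAt (x := s₀)) ε hε
  refine ⟨min δ₁ δ₂, lt_min hδ₁pos hδ₂pos, ?_⟩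
  intro r hr hdist
  have hrb : r ≤ b := hr
  rw [Real.dist_eq] at hdist ⊢
  rcases le_total r r₀ with hle | hle
  · have hmono := infIcc_mono hc hle hr₀b
    obtain ⟨s, hs, hseq⟩ := infIcc_attain hc hrb
    have hkey : sInf (h '' Icc r₀ b) - ε < h s := by
      rcases le_total r₀ s with h' | h'
      · have := infIcc_le hc (mem_Icc.mpr ⟨h', hs.2⟩)
        linarith
      · have hd : dist s r₀ < δ₁ := by
          rw [Real.dist_eq, abs_sub_lt_iff]
          have h1 : |r - r₀| < δ₁ := lt_of_lt_of_le hdist (min_le_left _ _)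
          rw [abs_sub_lt_iff] at h1
          constructor <;> [linarith; (have := hs.1; linarith)]
        have h2 := hδ₁ hd
        rw [Real.dist_eq, abs_sub_lt_iff] at h2
        have h3 : sInf (h '' Icc r₀ b) ≤ h r₀ := infIcc_le hc (mem_Icc.mpr ⟨le_refl _, hr₀b⟩)
        linarith
    rw [hseq] at hmono ⊢
    rw [abs_sub_lt_iff]
    constructor <;> linarith
  · have hmono := infIcc_mono hc hle hrb
    have hup : sInf (h '' Icc r b) < sInf (h '' Icc r₀ b) + ε := by
      rcases le_total r s₀ with h' | h'
      · have := infIcc_le hc (mem_Icc.mpr ⟨h', hs₀.2⟩)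
        rw [← hs₀eq] at this
        linarith
      · have hd : dist r s₀ < δ₂ := by
          rw [Real.dist_eq, abs_sub_lt_iff]
          have h1 : |r - r₀| < δ₂ := lt_of_lt_of_le hdist (min_le_right _ _)
          rw [abs_sub_lt_iff] at h1
          constructor <;> [(have := hs₀.1; linarith); linarith]
        have h2 := hδ₂ hd
        rw [Real.dist_eq, abs_sub_lt_iff] at h2
        have h3 : sInf (h '' Icc r b) ≤ h r := infIcc_le hc (mem_Icc.mpr ⟨le_refl _, hrb⟩)
        rw [hs₀eq]
        linarith
    rw [abs_sub_lt_iff]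
    constructor <;> linarith

lemma continuousOn_finset_sup' {ι X : Type*} [TopologicalSpace X] {t : Set X}
    (s : Finset ι) (hs : s.Nonempty) (f : ι → X → ℝ) (hf : ∀ i ∈ s, ContinuousOn (f i) t) :
    ContinuousOn (fun x => s.sup' hs fun i => f i x) t := by
  induction hs using Finset.Nonempty.cons_induction with
  | singleton a => simpa using hf a (by simp)
  | cons a s ha hsn ih =>
      have heq : ∀ x, ((Finset.cons a s ha).sup' (Finset.cons_nonempty ha) fun i => f i x)
          = (f a x) ⊔ (s.sup' hsn fun i => f i x) := fun x => Finset.sup'_cons hsn _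
      simp only [heq]
      exact (hf a (by simp)).sup (ih fun i hi => hf i (Finset.mem_cons_of_mem hi))

end helpers


section mainlemmas

lemma upperRel_le_p {N : ℕ} {H : Fin N → ℝ → ℝ} {F0 : (Fin N → ℝ) → ℝ} {p q : Fin N → ℝ}
    (hq : UpperGodunovRel H F0 p q) : q ≤ p := by
  intro α
  rcases hq α with ⟨he, _⟩ | ⟨hlt, _⟩
  · exact le_of_eq he
  · exact le_of_lt hlt

lemma upperRel_F_le {N : ℕ} {H : Fin N → ℝ → ℝ} (hHcont : ∀ α, Continuous (H α))
    {F0 : (Fin N → ℝ) → ℝ} (hF0mono : Antitone F0) {p q₁ q₂ : Fin N → ℝ}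
    (h₁ : UpperGodunovRel H F0 p q₁) (h₂ : UpperGodunovRel H F0 p q₂) :
    F0 q₁ ≤ F0 q₂ := by
  by_contra hlt
  push_neg at hlt
  have hle : q₂ ≤ q₁ := by
    intro α
    rcases h₁ α with ⟨he, _⟩ | ⟨hlt1, heq1⟩
    · rw [he]; exact upperRel_le_p h₂ α
    · by_contra hgt
      push_neg at hgt
      rcases h₂ α with ⟨he2, hge2⟩ | ⟨hlt2, heq2⟩
      · have h3 : F0 q₁ ≤ H α (p α) := by
          rw [heq1]
          exact infIcc_le (hHcont α) (mem_Icc.mpr ⟨le_of_lt hlt1, le_refl _⟩)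
        exact absurd (le_trans h3 hge2) (not_le.mpr hlt)
      · have h3 : F0 q₁ ≤ F0 q₂ := by
          rw [heq1, heq2]
          exact infIcc_mono (hHcont α) (le_of_lt hgt) (le_of_lt hlt2)
        exact absurd h3 (not_le.mpr hlt)
  exact absurd (hF0mono hle) (not_le.mpr hlt)

lemma upperRel_exists {N : ℕ} (hN : 1 ≤ N) (H : Fin N → ℝ → ℝ)
    (hHcont : ∀ α, Continuous (H α))
    (F0 : (Fin N → ℝ) → ℝ) (hF0cont : Continuous F0) (hF0mono : Antitone F0)
    (hF0sc : IsSemiCoercive F0) (p : Fin N → ℝ) :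
    ∃ q : Fin N → ℝ, UpperGodunovRel H F0 p q := by
  classical
  have hne : Nonempty (Fin N) := ⟨⟨0, hN⟩⟩
  have hfne : (Finset.univ : Finset (Fin N)).Nonempty := Finset.univ_nonempty
  set n : Fin N → ℝ → ℝ := fun α r => sInf (H α '' Icc r (p α)) with hndef
  have hnmono : ∀ α, ∀ r r' : ℝ, r ≤ r' → r' ≤ p α → n α r ≤ n α r' :=
    fun α r r' h1 h2 => infIcc_mono (hHcont α) h1 h2
  have hncont : ∀ α, ContinuousOn (n α) (Iic (p α)) :=
    fun α => infIcc_continuousOn (hHcont α) (p α)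
  have hnp : ∀ α, n α (p α) = H α (p α) := fun α => infIcc_self (H α) (p α)
  set g : (Fin N → ℝ) → ℝ :=
    fun q => max (F0 q) (Finset.univ.sup' hfne fun α => n α (q α)) with hgdef
  obtain ⟨R, hR⟩ := hF0sc (g p + 1)
  set l : Fin N → ℝ := fun α => min R (p α) with hldef
  have hlp : l ≤ p := fun α => min_le_right _ _
  have hpmem : p ∈ Icc l p := mem_Icc.mpr ⟨hlp, le_refl p⟩
  have hgc : ContinuousOn g (Icc l p) := by
    apply ContinuousOn.sup hF0cont.continuousOn
    apply continuousOn_finset_sup'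
    intro α _
    apply (hncont α).comp (continuous_apply α).continuousOn
    intro q hq
    exact mem_Iic.mpr ((mem_Icc.mp hq).2 α)
  obtain ⟨qs, hqsmem, hqsmin⟩ :=
    (isCompact_Icc : IsCompact (Icc l p)).exists_isMinOn ⟨p, hpmem⟩ hgc
  set lam := g qs with hlamdef
  have hqs_le : qs ≤ p := (mem_Icc.mp hqsmem).2
  have hF0qs : F0 qs ≤ lam := le_max_left _ _
  have hnqs : ∀ α, n α (qs α) ≤ lam :=
    fun α => le_trans (Finset.le_sup' (fun α => n α (qs α)) (Finset.mem_univ α))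
      (le_max_right _ _)
  have hlam_le : lam ≤ g p := isMinOn_iff.mp hqsmin p hpmem
  -- Key lower bound
  have hKL : ∀ q : Fin N → ℝ, q ≤ p → F0 q < lam → (∀ α, n α (q α) < lam) → False := by
    intro q hqp hF0q hnq
    have hq_in : q ∈ Icc l p := by
      refine mem_Icc.mpr ⟨fun α => ?_, hqp⟩
      by_contra hcon
      push_neg at hcon
      have h1 : g p + 1 ≤ F0 q :=
        hR q ⟨α, le_trans hcon.le (min_le_left _ _)⟩
      linarith
    have h1 : lam ≤ g q := isMinOn_iff.mp hqsmin q hq_in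
    have h2 : g q < lam :=
      max_lt hF0q ((Finset.sup'_lt_iff hfne).mpr fun α _ => hnq α)
    linarith
  -- lower level sets
  set Sd : Fin N → Set ℝ := fun α => Iic (p α) ∩ (n α) ⁻¹' Iic lam with hSddef
  have hSdclosed : ∀ α, IsClosed (Sd α) :=
    fun α => (hncont α).preimage_isClosed_of_isClosed isClosed_Iic isClosed_Iic
  have hSdbdd : ∀ α, BddAbove (Sd α) := fun α => ⟨p α, fun x hx => hx.1⟩
  have hqsSd : ∀ α, qs α ∈ Sd α := fun α => ⟨hqs_le α, hnqs α⟩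
  set d : Fin N → ℝ := fun α => sSup (Sd α) with hddef
  have hdmem : ∀ α, d α ∈ Sd α :=
    fun α => (hSdclosed α).csSup_mem ⟨qs α, hqsSd α⟩ (hSdbdd α)
  have hdp : ∀ α, d α ≤ p α := fun α => (hdmem α).1
  have hnd : ∀ α, n α (d α) ≤ lam := fun α => (hdmem α).2
  have hqd : ∀ α, qs α ≤ d α := fun α => le_csSup (hSdbdd α) (hqsSd α)
  -- upper level sets
  set Su : Fin N → Set ℝ := fun α => Iic (p α) ∩ (n α) ⁻¹' Ici lam with hSudef
  have hSuclosed : ∀ α, IsClosed (Su α) :=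
    fun α => (hncont α).preimage_isClosed_of_isClosed isClosed_Iic isClosed_Ici
  have hpSu : ∀ α, lam ≤ H α (p α) → p α ∈ Su α :=
    fun α hα => ⟨mem_Iic.mpr (le_refl _), by simpa [mem_preimage, hnp α] using hα⟩
  have hcmem : ∀ α, lam ≤ H α (p α) → BddBelow (Su α) → sInf (Su α) ∈ Su α :=
    fun α hα hb => (hSuclosed α).csInf_mem ⟨p α, hpSu α hα⟩ hb
  have hcd : ∀ α, lam ≤ H α (p α) → BddBelow (Su α) → sInf (Su α) ≤ d α := by
    intro α hα hb
    by_contra hcon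
    push_neg at hcon
    obtain ⟨r, hr1, hr2⟩ := exists_between hcon
    have hrp : r ≤ p α := le_trans hr2.le ((hcmem α hα hb).1)
    have hrSd : r ∉ Sd α := fun hmem => absurd (le_csSup (hSdbdd α) hmem) (not_le.mpr hr1)
    have hnr : lam < n α r := by
      by_contra hle
      push_neg at hle
      exact hrSd ⟨hrp, hle⟩
    exact absurd (csInf_le hb (⟨hrp, le_of_lt hnr⟩ : r ∈ Su α)) (not_le.mpr hr2)
  have hup_all : ∀ α, ¬BddBelow (Su α) → ∀ r, r ≤ p α → lam ≤ n α r := by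
    intro α hb r hrp
    obtain ⟨s, hsSu, hsr⟩ := not_bddBelow_iff.mp hb r
    exact le_trans hsSu.2 (hnmono α s r hsr.le hrp)
  -- the path
  set qt : ℝ → Fin N → ℝ := fun t α =>
    if H α (p α) < lam then p α
    else if BddBelow (Su α) then max (sInf (Su α)) (d α - t) else d α - t with hqtdef
  have hqtcont : Continuous qt := by
    apply continuous_pi
    intro α
    simp only [hqtdef]
    split_ifs with h1 h2
    · exact continuous_const
    · exact continuous_const.max (continuous_const.sub continuous_id)
    · exact continuous_const.sub continuous_id
  have hqtp : ∀ t : ℝ, 0 ≤ t → qt t ≤ p := by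
    intro t ht α
    simp only [hqtdef]
    split_ifs with h1 h2
    · exact le_refl _
    · push_neg at h1
      exact max_le ((hcmem α h1 h2).1) (le_trans (by linarith) (hdp α))
    · exact le_trans (by linarith) (hdp α)
  have hqt_le_d : ∀ t : ℝ, 0 ≤ t → ∀ α, ¬(H α (p α) < lam) → qt t α ≤ d α := by
    intro t ht α hα
    push_neg at hα
    simp only [hqtdef, if_neg (not_lt.mpr hα)]
    split_ifs with h2
    · exact max_le (hcd α hα h2) (by linarith)
    · linarith
  have hqt_n : ∀ t : ℝ, 0 ≤ t → ∀ α, ¬(H α (p α) < lam) → n α (qt t α) = lam := by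
    intro t ht α hα
    have hαle : lam ≤ H α (p α) := not_lt.mp hα
    have hle : qt t α ≤ d α := hqt_le_d t ht α hα
    have hub : n α (qt t α) ≤ lam := le_trans (hnmono α _ _ hle (hdp α)) (hnd α)
    have hqtpα : qt t α ≤ p α := hqtp t ht α
    have hlb : lam ≤ n α (qt t α) := by
      simp only [hqtdef] at hqtpα ⊢
      rw [if_neg (not_lt.mpr hαle)] at hqtpα ⊢
      split_ifs with h2
      · rw [if_pos h2] at hqtpα
        exact le_trans ((hcmem α hαle h2).2)
          (hnmono α _ _ (le_max_left _ _) hqtpα)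
      · rw [if_neg h2] at hqtpα
        exact hup_all α h2 _ hqtpα
    linarith
  -- value at 0
  have hq0ge : qs ≤ qt 0 := by
    intro α
    simp only [hqtdef]
    split_ifs with h1 h2
    · exact hqs_le α
    · exact le_trans (hqd α) (by simp)
    · simpa using hqd α
  have hf0le : F0 (qt 0) ≤ lam := le_trans (hF0mono hq0ge) hF0qs
  -- reach lam
  have hreach : ∃ t₂ : ℝ, 0 ≤ t₂ ∧ lam ≤ F0 (qt t₂) := by
    by_cases hcase : ∃ α, ¬(H α (p α) < lam) ∧ ¬BddBelow (Su α)
    · obtain ⟨α₀, hα₀, hb₀⟩ := hcase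
      obtain ⟨R₂, hR₂⟩ := hF0sc lam
      refine ⟨max 0 (d α₀ - R₂), le_max_left _ _, hR₂ _ ⟨α₀, ?_⟩⟩
      simp only [hqtdef, if_neg hα₀, if_neg hb₀]
      have : d α₀ - R₂ ≤ max 0 (d α₀ - R₂) := le_max_right _ _
      linarith
    · push_neg at hcase
      set t₂ := max 0 (Finset.univ.sup' hfne fun α => d α - sInf (Su α)) with ht₂def
      have ht₂0 : 0 ≤ t₂ := le_max_left _ _
      have hqlow : ∀ α, ¬(H α (p α) < lam) → qt t₂ α = sInf (Su α) := by
        intro α hα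
        have hb := hcase α (not_lt.mp hα)
        simp only [hqtdef, if_neg hα, if_pos hb]
        apply max_eq_left
        have h1 : d α - sInf (Su α) ≤ t₂ :=
          le_trans (Finset.le_sup' (fun α => d α - sInf (Su α)) (Finset.mem_univ α)) (le_max_right _ _)
        linarith
      refine ⟨t₂, ht₂0, ?_⟩
      by_contra hcon
      push_neg at hcon
      set φ : ℝ → Fin N → ℝ :=
        fun ε α => if H α (p α) < lam then p α else sInf (Su α) - ε with hφdef
      have hφ0 : φ 0 = qt t₂ := by
        funext α
        by_cases hα : H α (p α) < lam
        · simp only [hφdef, hqtdef, if_pos hα]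
        · rw [hqlow α hα]; simp only [hφdef, if_neg hα]; ring
      have hφcont : Continuous φ := by
        apply continuous_pi
        intro α
        simp only [hφdef]
        split_ifs with h1
        · exact continuous_const
        · exact continuous_const.sub continuous_id
      have htend : Filter.Tendsto (fun ε => F0 (φ ε)) (nhdsWithin 0 (Ioi 0)) (nhds (F0 (qt t₂))) := by
        rw [← hφ0]
        exact ((hF0cont.comp hφcont).tendsto 0).mono_left nhdsWithin_le_nhds
      have hev : ∀ᶠ ε in nhdsWithin (0:ℝ) (Ioi 0), F0 (φ ε) < lam :=
        htend.eventually_lt_const hcon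
      obtain ⟨ε, hεF, hεpos⟩ := (hev.and eventually_mem_nhdsWithin).exists
      refine hKL (φ ε) ?_ hεF ?_
      · intro α
        simp only [hφdef]
        split_ifs with h1
        · exact le_refl _
        · push_neg at h1
          have hsp : sInf (Su α) ≤ p α := mem_Iic.mp (hcmem α h1 (hcase α h1)).1
          have hε0 : (0:ℝ) < ε := hεpos
          linarith
      · intro α
        simp only [hφdef]
        split_ifs with h1
        · rwa [hnp α]
        · push_neg at h1
          have hb := hcase α h1
          have hε0 : (0:ℝ) < ε := hεpos
          have hlt : sInf (Su α) - ε < sInf (Su α) := by linarith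
          have hnm : sInf (Su α) - ε ∉ Su α := notMem_of_lt_csInf hlt hb
          have hrp : sInf (Su α) - ε ≤ p α := by
            have hsp : sInf (Su α) ≤ p α := mem_Iic.mp (hcmem α h1 hb).1; linarith
          by_contra hge
          push_neg at hge
          exact hnm ⟨hrp, hge⟩
  obtain ⟨t₂, ht₂0, ht₂⟩ := hreach
  have hcontf : ContinuousOn (fun t => F0 (qt t)) (Icc 0 t₂) :=
    (hF0cont.comp hqtcont).continuousOn
  have hlammem : lam ∈ Icc (F0 (qt 0)) (F0 (qt t₂)) := ⟨hf0le, ht₂⟩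
  obtain ⟨t, htmem, htval0⟩ := intermediate_value_Icc ht₂0 hcontf hlammem
  have htval : F0 (qt t) = lam := htval0
  have ht0 : 0 ≤ t := htmem.1
  refine ⟨qt t, fun α => ?_⟩
  by_cases hα : H α (p α) < lam
  · left
    constructor
    · simp only [hqtdef, if_pos hα]
    · rw [htval]; exact hα.le
  · have hkey : n α (qt t α) = lam := hqt_n t ht0 α hα
    rcases lt_or_eq_of_le (hqtp t ht0 α) with hlt | heq
    · right
      refine ⟨hlt, ?_⟩
      rw [htval, ← hkey]
    · left
      refine ⟨heq, ?_⟩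
      rw [htval]
      rw [heq] at hkey
      rw [hnp α] at hkey
      exact hkey.le
end mainlemmas

theorem upper_godunov_relaxation_well_defined
    (N : ℕ) (hN : 1 ≤ N)
    (H : Fin N → ℝ → ℝ)
    (hHcont : ∀ α, Continuous (H α))
    (hHcoer : ∀ α, CoerciveHam (H α))
    (F0 : (Fin N → ℝ) → ℝ)
    (hF0cont : Continuous F0)
    (hF0mono : Antitone F0)
    (hF0sc : IsSemiCoercive F0) :
    ∀ p : Fin N → ℝ,
      (∃ q : Fin N → ℝ, UpperGodunovRel H F0 p q) ∧
      (∀ q : Fin N → ℝ, UpperGodunovRel H F0 p q → q ≤ p) ∧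
      (∀ q₁ q₂ : Fin N → ℝ,
        UpperGodunovRel H F0 p q₁ → UpperGodunovRel H F0 p q₂ → F0 q₁ = F0 q₂) := by
  intro p
  refine ⟨upperRel_exists hN H hHcont F0 hF0cont hF0mono hF0sc p,
    fun q hq => upperRel_le_p hq,
    fun q₁ q₂ h₁ h₂ => le_antisymm (upperRel_F_le hHcont hF0mono h₁ h₂)
      (upperRel_F_le hHcont hF0mono h₂ h₁)⟩
end
end

section
/- Suppose F_0 is semi-coercive. Let g : ℝ^N → ℝ be a function such that for every p ∈ ℝ^N there exists q ∈ ℝ^N satisfying the lower Godunov relation for F_0 at p with g(p) = F_0(q). Then g is nonincreasing in each of its arguments, continuous, and semi-coercive. The same conclusions hold if 'lower Godunov relation' is replaced by 'upper Godunov relation'. -/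
open Set

noncomputable section

lemma lower_exists_r {N : ℕ} {H : Fin N → ℝ → ℝ} (hHcont : ∀ α, Continuous (H α))
    {F : (Fin N → ℝ) → ℝ} {p q : Fin N → ℝ} (hrel : LowerGodunovRel H F p q) :
    ∃ r : Fin N → ℝ, p ≤ r ∧ r ≤ q ∧ ∀ α, F q ≤ H α (r α) := by
  have hx : ∀ α, ∃ x, p α ≤ x ∧ x ≤ q α ∧ F q ≤ H α x := by
    intro α
    rcases hrel α with ⟨heq, hle⟩ | ⟨hlt, hmax⟩
    · exact ⟨p α, le_rfl, heq.ge, hle⟩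
    · obtain ⟨x, hxmem, hxmax⟩ :=
        isCompact_Icc.exists_isMaxOn (nonempty_Icc.mpr hlt.le) ((hHcont α).continuousOn)
      refine ⟨x, hxmem.1, hxmem.2, ?_⟩
      have hgr : IsGreatest (H α '' Icc (p α) (q α)) (H α x) :=
        ⟨mem_image_of_mem _ hxmem, by rintro y ⟨z, hz, rfl⟩; exact hxmax hz⟩
      rw [hmax, hgr.csSup_eq]
  choose r h1 h2 h3 using hx
  exact ⟨r, h1, h2, h3⟩

lemma lower_le {N : ℕ} {H : Fin N → ℝ → ℝ} (hHcont : ∀ α, Continuous (H α))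
    {F : (Fin N → ℝ) → ℝ} (hF : Antitone F) {p q : Fin N → ℝ}
    (hrel : LowerGodunovRel H F p q)
    (r : Fin N → ℝ) (hpr : p ≤ r) : F r ≤ F q ∨ ∃ α, H α (r α) ≤ F q := by
  by_cases hqr : q ≤ r
  · exact Or.inl (hF hqr)
  · right
    rw [Pi.le_def] at hqr; push_neg at hqr
    obtain ⟨α, hα⟩ := hqr
    refine ⟨α, ?_⟩
    rcases hrel α with ⟨heq, _⟩ | ⟨hlt, hmax⟩
    · exact absurd (lt_of_le_of_lt (hpr α) hα) (by rw [heq]; exact lt_irrefl _)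
    · rw [hmax]
      exact le_csSup (isCompact_Icc.image (hHcont α)).bddAbove
        (mem_image_of_mem _ ⟨hpr α, hα.le⟩)

lemma upper_exists_r {N : ℕ} {H : Fin N → ℝ → ℝ} (hHcont : ∀ α, Continuous (H α))
    {F : (Fin N → ℝ) → ℝ} {p q : Fin N → ℝ} (hrel : UpperGodunovRel H F p q) :
    ∃ r : Fin N → ℝ, q ≤ r ∧ r ≤ p ∧ ∀ α, H α (r α) ≤ F q := by
  have hx : ∀ α, ∃ x, q α ≤ x ∧ x ≤ p α ∧ H α x ≤ F q := by
    intro α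
    rcases hrel α with ⟨heq, hle⟩ | ⟨hlt, hmin⟩
    · exact ⟨p α, heq.le, le_rfl, hle⟩
    · obtain ⟨x, hxmem, hxmin⟩ :=
        isCompact_Icc.exists_isMinOn (nonempty_Icc.mpr hlt.le) ((hHcont α).continuousOn)
      refine ⟨x, hxmem.1, hxmem.2, ?_⟩
      have hgr : IsLeast (H α '' Icc (q α) (p α)) (H α x) :=
        ⟨mem_image_of_mem _ hxmem, by rintro y ⟨z, hz, rfl⟩; exact hxmin hz⟩
      rw [hmin, hgr.csInf_eq]
  choose r h1 h2 h3 using hx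
  exact ⟨r, h1, h2, h3⟩

lemma upper_ge {N : ℕ} {H : Fin N → ℝ → ℝ} (hHcont : ∀ α, Continuous (H α))
    {F : (Fin N → ℝ) → ℝ} (hF : Antitone F) {p q : Fin N → ℝ}
    (hrel : UpperGodunovRel H F p q)
    (r : Fin N → ℝ) (hrp : r ≤ p) : F q ≤ F r ∨ ∃ α, F q ≤ H α (r α) := by
  by_cases hrq : r ≤ q
  · exact Or.inl (hF hrq)
  · right
    rw [Pi.le_def] at hrq; push_neg at hrq
    obtain ⟨α, hα⟩ := hrq
    refine ⟨α, ?_⟩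
    rcases hrel α with ⟨heq, _⟩ | ⟨hlt, hmin⟩
    · exact absurd (lt_of_lt_of_le hα (hrp α)) (by rw [heq]; exact lt_irrefl _)
    · rw [hmin]
      exact csInf_le (isCompact_Icc.image (hHcont α)).bddBelow
        (mem_image_of_mem _ ⟨hα.le, hrp α⟩)

lemma dist_sup_le {N : ℕ} (r p p' : Fin N → ℝ) (h : ∀ α, p α ≤ r α) :
    dist (fun α => max (r α) (p' α)) r ≤ dist p' p := by
  rw [dist_pi_le_iff dist_nonneg]
  intro α
  have h1 : dist (p' α) (p α) ≤ dist p' p := dist_le_pi_dist _ _ α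
  rw [Real.dist_eq] at h1 ⊢
  have h2 : p' α ≤ r α + dist p' p := by
    have := abs_sub_le_iff.mp h1
    linarith [this.1, h α]
  have h3 : r α ≤ max (r α) (p' α) := le_max_left _ _
  have h4 : max (r α) (p' α) ≤ r α + dist p' p :=
    max_le (le_add_of_nonneg_right dist_nonneg) h2
  rw [abs_sub_le_iff]; constructor <;> linarith

lemma dist_inf_le {N : ℕ} (r p p' : Fin N → ℝ) (h : ∀ α, r α ≤ p α) :
    dist (fun α => min (r α) (p' α)) r ≤ dist p' p := by
  rw [dist_pi_le_iff dist_nonneg]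
  intro α
  have h1 : dist (p' α) (p α) ≤ dist p' p := dist_le_pi_dist _ _ α
  rw [Real.dist_eq] at h1 ⊢
  have h2 : r α - dist p' p ≤ p' α := by
    have := abs_sub_le_iff.mp h1
    linarith [this.2, h α]
  have h3 : min (r α) (p' α) ≤ r α := min_le_left _ _
  have h4 : r α - dist p' p ≤ min (r α) (p' α) :=
    le_min (by linarith [dist_nonneg (x := p') (y := p)]) h2
  rw [abs_sub_le_iff]; constructor <;> linarith

lemma lower_main (N : ℕ) (hN : 1 ≤ N)
    (H : Fin N → ℝ → ℝ)
    (hHcont : ∀ α, Continuous (H α))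
    (hHcoer : ∀ α, CoerciveHam (H α))
    (F0 : (Fin N → ℝ) → ℝ)
    (hF0cont : Continuous F0)
    (hF0mono : Antitone F0)
    (hF0sc : IsSemiCoercive F0)
    (g : (Fin N → ℝ) → ℝ)
    (hg : ∀ p : Fin N → ℝ, ∃ q : Fin N → ℝ, LowerGodunovRel H F0 p q ∧ g p = F0 q) :
    Antitone g ∧ Continuous g ∧ IsSemiCoercive g := by
  haveI : Nonempty (Fin N) := ⟨⟨0, hN⟩⟩
  refine ⟨?_, ?_, ?_⟩
  · -- Antitone
    intro p p' hpp'
    obtain ⟨q, hq, hgq⟩ := hg p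
    obtain ⟨q', hq', hgq'⟩ := hg p'
    obtain ⟨r, hpr, hrq, hHr⟩ := lower_exists_r hHcont hq'
    rw [hgq, hgq']
    rcases lower_le hHcont hF0mono hq r (le_trans hpp' hpr) with h | ⟨α, h⟩
    · exact le_trans (hF0mono hrq) h
    · exact le_trans (hHr α) h
  · -- Continuous
    rw [Metric.continuous_iff]
    intro p ε hε
    obtain ⟨q, hq, hgq⟩ := hg p
    obtain ⟨r, hpr, hrq, hHr⟩ := lower_exists_r hHcont hq
    set Ψ : (Fin N → ℝ) → ℝ × (Fin N → ℝ) := fun x => (F0 x, fun α => H α (x α)) with hΨ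
    have hΨcont : Continuous Ψ :=
      hF0cont.prodMk (continuous_pi fun α => (hHcont α).comp (continuous_apply α))
    have hext : ∀ x y : Fin N → ℝ, dist (F0 x) (F0 y) ≤ dist (Ψ x) (Ψ y) ∧
        ∀ α, dist (H α (x α)) (H α (y α)) ≤ dist (Ψ x) (Ψ y) := by
      intro x y
      constructor
      · rw [Prod.dist_eq]; exact le_max_left _ _
      · intro α
        refine le_trans (dist_le_pi_dist (fun β => H β (x β)) (fun β => H β (y β)) α) ?_
        rw [Prod.dist_eq]; exact le_max_right _ _
    have hca : ContinuousAt Ψ r := hΨcont.continuousAt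
    rw [Metric.continuousAt_iff] at hca
    obtain ⟨δ₁, hδ₁pos, hδ₁⟩ := hca (ε/2) (by positivity)
    set C := F0 (fun α => p α - 1) with hC
    choose Rc hRc using fun α => hHcoer α (C + 1)
    set B := Finset.univ.sup' Finset.univ_nonempty (fun α => max |Rc α| (|p α| + 1)) with hB
    have hBge : ∀ α, max |Rc α| (|p α| + 1) ≤ B := fun α =>
      Finset.le_sup' (fun β => max |Rc β| (|p β| + 1)) (Finset.mem_univ α)
    have hpB : ∀ α, |p α| + 1 ≤ B := fun α => le_trans (le_max_right _ _) (hBge α)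
    have hRcB : ∀ α, |Rc α| ≤ B := fun α => le_trans (le_max_left _ _) (hBge α)
    have hB0 : (0:ℝ) ≤ B := le_trans (by positivity) (hpB ⟨0, hN⟩)
    have hUC := (isCompact_closedBall (0 : Fin N → ℝ) B).uniformContinuousOn_of_continuous
      hΨcont.continuousOn
    rw [Metric.uniformContinuousOn_iff] at hUC
    obtain ⟨δ₂, hδ₂pos, hδ₂⟩ := hUC (ε/2) (by positivity)
    refine ⟨min δ₁ (min δ₂ 1), by positivity, ?_⟩
    intro p' hp'
    obtain ⟨q', hq', hgq'⟩ := hg p'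
    have hd1 : dist p' p < δ₁ := lt_of_lt_of_le hp' (min_le_left _ _)
    have hd2 : dist p' p < δ₂ := lt_of_lt_of_le hp' (le_trans (min_le_right _ _) (min_le_left _ _))
    have hd3 : dist p' p < 1 := lt_of_lt_of_le hp' (le_trans (min_le_right _ _) (min_le_right _ _))
    have hcoord : ∀ α, |p' α - p α| ≤ dist p' p := fun α => by
      have := dist_le_pi_dist p' p α; rwa [Real.dist_eq] at this
    have dir1 : g p - ε/2 ≤ g p' := by
      set r'' : Fin N → ℝ := fun α => max (r α) (p' α) with hr''
      have hdist : dist r'' r < δ₁ := lt_of_le_of_lt (dist_sup_le r p p' hpr) hd1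
      have hΨd := hδ₁ hdist
      have hFd : dist (F0 r'') (F0 r) < ε/2 := lt_of_le_of_lt (hext r'' r).1 hΨd
      have hp'r'' : p' ≤ r'' := fun α => le_max_right _ _
      rcases lower_le hHcont hF0mono hq' r'' hp'r'' with h | ⟨α, h⟩
      · have h1 : F0 q ≤ F0 r := hF0mono hrq
        rw [Real.dist_eq, abs_sub_lt_iff] at hFd
        rw [hgq, hgq']; linarith [hFd.2]
      · have h1 : F0 q ≤ H α (r α) := hHr α
        have h2 : dist (H α (r'' α)) (H α (r α)) < ε/2 := lt_of_le_of_lt ((hext r'' r).2 α) hΨd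
        rw [Real.dist_eq, abs_sub_lt_iff] at h2
        rw [hgq, hgq']; linarith [h2.2]
    have dir2 : g p' - ε/2 ≤ g p := by
      obtain ⟨r', hp'r', hr'q', hHr'⟩ := lower_exists_r hHcont hq'
      have hp'B : ∀ α, |p' α| ≤ B := by
        intro α
        have h1 := hcoord α
        have h2 : |p' α| ≤ |p α| + |p' α - p α| := by
          have := abs_sub_abs_le_abs_sub (p' α) (p α); linarith [abs_nonneg (p' α - p α)]
        linarith [hpB α, hd3]
      have hFq'C : F0 q' ≤ C := by
        have hle : (fun α => p α - 1) ≤ p' := by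
          intro α
          have h1 := hcoord α
          have h2 := abs_sub_le_iff.mp (le_of_lt (lt_of_le_of_lt h1 hd3))
          show p α - 1 ≤ p' α
          linarith [h2.2]
        exact le_trans (hF0mono (le_trans hp'r' hr'q')) (hF0mono hle)
      have hq'B : ∀ α, |q' α| ≤ B := by
        intro α
        rcases hq' α with ⟨heq, _⟩ | ⟨hlt, hmax⟩
        · rw [heq]; exact hp'B α
        · have hHq' : H α (q' α) ≤ F0 q' := by
            rw [hmax]
            exact le_csSup (isCompact_Icc.image (hHcont α)).bddAbove
              (mem_image_of_mem _ ⟨hlt.le, le_rfl⟩)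
          by_contra habs
          push_neg at habs
          have h1 : Rc α ≤ |q' α| := le_trans (le_abs_self _) (le_trans (hRcB α) habs.le)
          have h2 := hRc α _ h1
          linarith
      have hr'B : ∀ α, |r' α| ≤ B := by
        intro α
        rw [abs_le]
        constructor
        · linarith [(abs_le.mp (hp'B α)).1, hp'r' α]
        · linarith [(abs_le.mp (hq'B α)).2, hr'q' α]
      have hr'K : r' ∈ Metric.closedBall (0 : Fin N → ℝ) B := by
        rw [Metric.mem_closedBall, dist_pi_le_iff hB0]
        intro α; rw [Real.dist_eq, Pi.zero_apply, sub_zero]; exact hr'B α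
      set r'' : Fin N → ℝ := fun α => max (r' α) (p α) with hr''
      have hr''K : r'' ∈ Metric.closedBall (0 : Fin N → ℝ) B := by
        rw [Metric.mem_closedBall, dist_pi_le_iff hB0]
        intro α; rw [Real.dist_eq, Pi.zero_apply, sub_zero, abs_le]
        constructor
        · have := (abs_le.mp (hr'B α)).1
          exact le_trans this (le_max_left _ _)
        · exact max_le (abs_le.mp (hr'B α)).2 (by linarith [hpB α, abs_le.mp (le_refl |p α|), le_abs_self (p α)])
      have hdist : dist r'' r' < δ₂ := by
        have := dist_sup_le r' p' p hp'r'
        rw [dist_comm p p'] at this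
        exact lt_of_le_of_lt this hd2
      have hΨd := hδ₂ r'' hr''K r' hr'K hdist
      have hFq'r' : F0 q' ≤ F0 r' := hF0mono hr'q'
      rcases lower_le hHcont hF0mono hq r'' (fun α => le_max_right _ _) with h | ⟨α, h⟩
      · have hFd : dist (F0 r'') (F0 r') < ε/2 := lt_of_le_of_lt (hext r'' r').1 hΨd
        rw [Real.dist_eq, abs_sub_lt_iff] at hFd
        rw [hgq, hgq']; linarith [hFd.2]
      · have h2 : dist (H α (r'' α)) (H α (r' α)) < ε/2 := lt_of_le_of_lt ((hext r'' r').2 α) hΨd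
        rw [Real.dist_eq, abs_sub_lt_iff] at h2
        rw [hgq, hgq']; linarith [h2.2, hHr' α]
    rw [Real.dist_eq, abs_sub_lt_iff]
    constructor <;> linarith
  · -- IsSemiCoercive
    intro M
    choose Rc hRc using fun α => hHcoer α M
    obtain ⟨R0, hR0⟩ := hF0sc M
    refine ⟨min R0 (Finset.univ.inf' Finset.univ_nonempty fun α => -|Rc α|), ?_⟩
    rintro p ⟨α, hα⟩
    obtain ⟨q, hq, hgq⟩ := hg p
    rw [hgq]
    rcases hq α with ⟨heq, _⟩ | ⟨hlt, hmax⟩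
    · exact hR0 q ⟨α, by rw [heq]; exact le_trans hα (min_le_left _ _)⟩
    · rw [hmax]
      have hpR : p α ≤ -|Rc α| :=
        le_trans hα (le_trans (min_le_right _ _)
          (Finset.inf'_le _ (Finset.mem_univ α)))
      have h1 : Rc α ≤ |p α| := by
        rw [abs_of_nonpos (by linarith [abs_nonneg (Rc α)])]
        linarith [le_abs_self (Rc α)]
      exact le_trans (hRc α _ h1)
        (le_csSup (isCompact_Icc.image (hHcont α)).bddAbove
          (mem_image_of_mem _ ⟨le_rfl, hlt.le⟩))

lemma upper_main (N : ℕ) (hN : 1 ≤ N)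
    (H : Fin N → ℝ → ℝ)
    (hHcont : ∀ α, Continuous (H α))
    (hHcoer : ∀ α, CoerciveHam (H α))
    (F0 : (Fin N → ℝ) → ℝ)
    (hF0cont : Continuous F0)
    (hF0mono : Antitone F0)
    (hF0sc : IsSemiCoercive F0)
    (g : (Fin N → ℝ) → ℝ)
    (hg : ∀ p : Fin N → ℝ, ∃ q : Fin N → ℝ, UpperGodunovRel H F0 p q ∧ g p = F0 q) :
    Antitone g ∧ Continuous g ∧ IsSemiCoercive g := by
  haveI : Nonempty (Fin N) := ⟨⟨0, hN⟩⟩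
  refine ⟨?_, ?_, ?_⟩
  · -- Antitone
    intro p p' hpp'
    obtain ⟨q, hq, hgq⟩ := hg p
    obtain ⟨q', hq', hgq'⟩ := hg p'
    obtain ⟨r, hqr, hrp, hHr⟩ := upper_exists_r hHcont hq
    rw [hgq, hgq']
    rcases upper_ge hHcont hF0mono hq' r (le_trans hrp hpp') with h | ⟨α, h⟩
    · exact le_trans h (hF0mono hqr)
    · exact le_trans h (hHr α)
  · -- Continuous
    rw [Metric.continuous_iff]
    intro p ε hε
    obtain ⟨q, hq, hgq⟩ := hg p
    obtain ⟨r, hqr, hrp, hHr⟩ := upper_exists_r hHcont hq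
    set Ψ : (Fin N → ℝ) → ℝ × (Fin N → ℝ) := fun x => (F0 x, fun α => H α (x α)) with hΨ
    have hΨcont : Continuous Ψ :=
      hF0cont.prodMk (continuous_pi fun α => (hHcont α).comp (continuous_apply α))
    have hext : ∀ x y : Fin N → ℝ, dist (F0 x) (F0 y) ≤ dist (Ψ x) (Ψ y) ∧
        ∀ α, dist (H α (x α)) (H α (y α)) ≤ dist (Ψ x) (Ψ y) := by
      intro x y
      constructor
      · rw [Prod.dist_eq]; exact le_max_left _ _
      · intro α
        refine le_trans (dist_le_pi_dist (fun β => H β (x β)) (fun β => H β (y β)) α) ?_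
        rw [Prod.dist_eq]; exact le_max_right _ _
    have hca : ContinuousAt Ψ r := hΨcont.continuousAt
    rw [Metric.continuousAt_iff] at hca
    obtain ⟨δ₁, hδ₁pos, hδ₁⟩ := hca (ε/2) (by positivity)
    set C := Finset.univ.sup' Finset.univ_nonempty
      (fun α => sSup (H α '' Icc (p α - 1) (p α + 1))) + 1 with hCdef
    have hCge : ∀ α, sSup (H α '' Icc (p α - 1) (p α + 1)) ≤ C - 1 := fun α => by
      have := Finset.le_sup' (fun β => sSup (H β '' Icc (p β - 1) (p β + 1)))
        (Finset.mem_univ α)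
      rw [hCdef]; linarith
    obtain ⟨R0, hR0⟩ := hF0sc C
    set B := Finset.univ.sup' Finset.univ_nonempty (fun α => max |R0| (|p α| + 1)) with hB
    have hBge : ∀ α, max |R0| (|p α| + 1) ≤ B := fun α =>
      Finset.le_sup' (fun β => max |R0| (|p β| + 1)) (Finset.mem_univ α)
    have hpB : ∀ α, |p α| + 1 ≤ B := fun α => le_trans (le_max_right _ _) (hBge α)
    have hR0B : |R0| ≤ B := le_trans (le_max_left _ _) (hBge ⟨0, hN⟩)
    have hB0 : (0:ℝ) ≤ B := le_trans (by positivity) (hpB ⟨0, hN⟩)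
    have hUC := (isCompact_closedBall (0 : Fin N → ℝ) B).uniformContinuousOn_of_continuous
      hΨcont.continuousOn
    rw [Metric.uniformContinuousOn_iff] at hUC
    obtain ⟨δ₂, hδ₂pos, hδ₂⟩ := hUC (ε/2) (by positivity)
    refine ⟨min δ₁ (min δ₂ 1), by positivity, ?_⟩
    intro p' hp'
    obtain ⟨q', hq', hgq'⟩ := hg p'
    have hd1 : dist p' p < δ₁ := lt_of_lt_of_le hp' (min_le_left _ _)
    have hd2 : dist p' p < δ₂ := lt_of_lt_of_le hp' (le_trans (min_le_right _ _) (min_le_left _ _))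
    have hd3 : dist p' p < 1 := lt_of_lt_of_le hp' (le_trans (min_le_right _ _) (min_le_right _ _))
    have hcoord : ∀ α, |p' α - p α| ≤ dist p' p := fun α => by
      have := dist_le_pi_dist p' p α; rwa [Real.dist_eq] at this
    have dir1 : g p' - ε/2 ≤ g p := by
      set r'' : Fin N → ℝ := fun α => min (r α) (p' α) with hr''
      have hdist : dist r'' r < δ₁ := lt_of_le_of_lt (dist_inf_le r p p' hrp) hd1
      have hΨd := hδ₁ hdist
      have hFd : dist (F0 r'') (F0 r) < ε/2 := lt_of_le_of_lt (hext r'' r).1 hΨd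
      have hr''p' : r'' ≤ p' := fun α => min_le_right _ _
      rcases upper_ge hHcont hF0mono hq' r'' hr''p' with h | ⟨α, h⟩
      · have h1 : F0 r ≤ F0 q := hF0mono hqr
        rw [Real.dist_eq, abs_sub_lt_iff] at hFd
        rw [hgq, hgq']; linarith [hFd.1]
      · have h1 : H α (r α) ≤ F0 q := hHr α
        have h2 : dist (H α (r'' α)) (H α (r α)) < ε/2 := lt_of_le_of_lt ((hext r'' r).2 α) hΨd
        rw [Real.dist_eq, abs_sub_lt_iff] at h2
        rw [hgq, hgq']; linarith [h2.1]
    have dir2 : g p - ε/2 ≤ g p' := by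
      obtain ⟨r', hq'r', hr'p', hHr'⟩ := upper_exists_r hHcont hq'
      have hp'B : ∀ α, |p' α| ≤ B := by
        intro α
        have h1 := hcoord α
        have h2 : |p' α| ≤ |p α| + |p' α - p α| := by
          have := abs_sub_abs_le_abs_sub (p' α) (p α); linarith [abs_nonneg (p' α - p α)]
        linarith [hpB α, hd3]
      have hq'B : ∀ α, |q' α| ≤ B := by
        intro α
        rcases hq' α with ⟨heq, _⟩ | ⟨hlt, hmin⟩
        · rw [heq]; exact hp'B α
        · have hHq' : F0 q' ≤ H α (p' α) := by
            rw [hmin]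
            exact csInf_le (isCompact_Icc.image (hHcont α)).bddBelow
              (mem_image_of_mem _ ⟨hlt.le, le_rfl⟩)
          have hp'mem : p' α ∈ Icc (p α - 1) (p α + 1) := by
            have h1 := abs_sub_le_iff.mp (le_of_lt (lt_of_le_of_lt (hcoord α) hd3))
            constructor <;> linarith [h1.1, h1.2]
          have hC' : F0 q' ≤ C - 1 :=
            le_trans hHq' (le_trans
              (le_csSup (isCompact_Icc.image (hHcont α)).bddAbove
                (mem_image_of_mem _ hp'mem)) (hCge α))
          have hall : ∀ β, R0 < q' β := by
            intro β
            by_contra hb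
            push_neg at hb
            have := hR0 q' ⟨β, hb⟩
            linarith
          rw [abs_le]
          constructor
          · have := hall α
            have h3 : -|R0| ≤ R0 := neg_abs_le R0
            linarith [hR0B]
          · have h4 : q' α ≤ p' α := hlt.le
            linarith [(abs_le.mp (hp'B α)).2]
      have hr'B : ∀ α, |r' α| ≤ B := by
        intro α
        rw [abs_le]
        constructor
        · linarith [(abs_le.mp (hq'B α)).1, hq'r' α]
        · linarith [(abs_le.mp (hp'B α)).2, hr'p' α]
      have hr'K : r' ∈ Metric.closedBall (0 : Fin N → ℝ) B := by
        rw [Metric.mem_closedBall, dist_pi_le_iff hB0]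
        intro α; rw [Real.dist_eq, Pi.zero_apply, sub_zero]; exact hr'B α
      set r'' : Fin N → ℝ := fun α => min (r' α) (p α) with hr''
      have hr''K : r'' ∈ Metric.closedBall (0 : Fin N → ℝ) B := by
        rw [Metric.mem_closedBall, dist_pi_le_iff hB0]
        intro α; rw [Real.dist_eq, Pi.zero_apply, sub_zero, abs_le]
        constructor
        · refine le_min ((abs_le.mp (hr'B α)).1) ?_
          linarith [hpB α, neg_abs_le (p α)]
        · exact le_trans (min_le_left _ _) (abs_le.mp (hr'B α)).2
      have hdist : dist r'' r' < δ₂ := by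
        have := dist_inf_le r' p' p hr'p'
        rw [dist_comm p p'] at this
        exact lt_of_le_of_lt this hd2
      have hΨd := hδ₂ r'' hr''K r' hr'K hdist
      have hFr'q' : F0 r' ≤ F0 q' := hF0mono hq'r'
      rcases upper_ge hHcont hF0mono hq r'' (fun α => min_le_right _ _) with h | ⟨α, h⟩
      · have hFd : dist (F0 r'') (F0 r') < ε/2 := lt_of_le_of_lt (hext r'' r').1 hΨd
        rw [Real.dist_eq, abs_sub_lt_iff] at hFd
        rw [hgq, hgq']; linarith [hFd.1]
      · have h2 : dist (H α (r'' α)) (H α (r' α)) < ε/2 := lt_of_le_of_lt ((hext r'' r').2 α) hΨd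
        rw [Real.dist_eq, abs_sub_lt_iff] at h2
        rw [hgq, hgq']; linarith [h2.1, hHr' α]
    rw [Real.dist_eq, abs_sub_lt_iff]
    constructor <;> linarith
  · -- IsSemiCoercive
    intro M
    choose Rc hRc using fun α => hHcoer α M
    refine ⟨Finset.univ.inf' Finset.univ_nonempty fun α => -|Rc α|, ?_⟩
    rintro p ⟨α, hα⟩
    obtain ⟨q, hq, hgq⟩ := hg p
    rw [hgq]
    have hpR : p α ≤ -|Rc α| :=
      le_trans hα (Finset.inf'_le _ (Finset.mem_univ α))
    rcases hq α with ⟨heq, hle⟩ | ⟨hlt, hmin⟩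
    · refine le_trans (hRc α (p α) ?_) hle
      rw [abs_of_nonpos (by linarith [abs_nonneg (Rc α)])]
      linarith [le_abs_self (Rc α)]
    · rw [hmin]
      refine le_csInf ((nonempty_Icc.mpr hlt.le).image _) ?_
      rintro y ⟨z, hz, rfl⟩
      refine hRc α z ?_
      have hz2 : z ≤ -|Rc α| := le_trans hz.2 hpR
      rw [abs_of_nonpos (by linarith [abs_nonneg (Rc α)])]
      linarith [le_abs_self (Rc α)]

theorem godunov_semi_relaxations_properties
    (N : ℕ) (hN : 1 ≤ N)
    (H : Fin N → ℝ → ℝ)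
    (hHcont : ∀ α, Continuous (H α))
    (hHcoer : ∀ α, CoerciveHam (H α))
    (F0 : (Fin N → ℝ) → ℝ)
    (hF0cont : Continuous F0)
    (hF0mono : Antitone F0)
    (hF0sc : IsSemiCoercive F0) :
    (∀ g : (Fin N → ℝ) → ℝ,
      (∀ p : Fin N → ℝ, ∃ q : Fin N → ℝ, LowerGodunovRel H F0 p q ∧ g p = F0 q) →
      Antitone g ∧ Continuous g ∧ IsSemiCoercive g) ∧
    (∀ g : (Fin N → ℝ) → ℝ,
      (∀ p : Fin N → ℝ, ∃ q : Fin N → ℝ, UpperGodunovRel H F0 p q ∧ g p = F0 q) →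
      Antitone g ∧ Continuous g ∧ IsSemiCoercive g) := by
  exact ⟨fun g hg => lower_main N hN H hHcont hHcoer F0 hF0cont hF0mono hF0sc g hg,
    fun g hg => upper_main N hN H hHcont hHcoer F0 hF0cont hF0mono hF0sc g hg⟩
end
end

section
/- Suppose F_0 is semi-coercive. Let F_1 : ℝ^N → ℝ be such that for every p̃ ∈ ℝ^N there exists q ∈ ℝ^N satisfying the upper Godunov relation for F_0 at p̃ with F_1(p̃) = F_0(q). Then for every p ∈ ℝ^N, every r ∈ ℝ^N satisfying the lower Godunov relation for F_1 at p, and every s ∈ ℝ^N with F_0(s) = G^α(s^α, p^α) for all α, one has F_1(r) = F_0(s). Symmetrically, if F_2 : ℝ^N → ℝ is such that for every p̃ there exists q satisfying the lower Godunov relation for F_0 at p̃ with F_2(p̃) = F_0(q), then for every p, every r satisfying the upper Godunov relation for F_2 at p, and every s with F_0(s) = G^α(s^α, p^α) for all α, one has F_2(r) = F_0(s). (That is, (F_0Ḡ)G̲ = F_0G = (F_0G̲)Ḡ.) -/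
open Set

noncomputable section

section Helpers

variable {h : ℝ → ℝ}

lemma le_sSup_img (hc : Continuous h) {a b x : ℝ} (hx : x ∈ Icc a b) :
    h x ≤ sSup (h '' Icc a b) :=
  le_csSup (isCompact_Icc.image hc).bddAbove ⟨x, hx, rfl⟩

lemma sInf_img_le (hc : Continuous h) {a b x : ℝ} (hx : x ∈ Icc a b) :
    sInf (h '' Icc a b) ≤ h x :=
  csInf_le (isCompact_Icc.image hc).bddBelow ⟨x, hx, rfl⟩

lemma sSup_img_le {a b l : ℝ} (hab : a ≤ b) (hub : ∀ x ∈ Icc a b, h x ≤ l) :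
    sSup (h '' Icc a b) ≤ l :=
  csSup_le ((nonempty_Icc.2 hab).image h) (by rintro _ ⟨x, hx, rfl⟩; exact hub x hx)

lemma le_sInf_img {a b l : ℝ} (hab : a ≤ b) (hlb : ∀ x ∈ Icc a b, l ≤ h x) :
    l ≤ sInf (h '' Icc a b) :=
  le_csInf ((nonempty_Icc.2 hab).image h) (by rintro _ ⟨x, hx, rfl⟩; exact hlb x hx)

lemma godunov_self (h : ℝ → ℝ) (a : ℝ) : godunov h a a = h a := by
  simp [godunov, Icc_self]

lemma godunov_mono_s6 (hc : Continuous h) (p : ℝ) {a b : ℝ} (hab : a ≤ b) :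
    godunov h a p ≤ godunov h b p := by
  unfold godunov
  by_cases h1 : p ≤ a
  · rw [if_pos h1, if_pos (h1.trans hab)]
    exact csSup_le_csSup (isCompact_Icc.image hc).bddAbove
      ((nonempty_Icc.2 h1).image h) (image_mono (Icc_subset_Icc_right hab))
  · rw [if_neg h1]
    by_cases h2 : p ≤ b
    · rw [if_pos h2]
      exact (sInf_img_le hc ⟨le_of_not_ge h1, le_refl p⟩).trans
        (le_sSup_img hc ⟨le_refl p, h2⟩)
    · rw [if_neg h2]
      exact csInf_le_csInf (isCompact_Icc.image hc).bddBelow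
        ((nonempty_Icc.2 (le_of_not_ge h2)).image h) (image_mono (Icc_subset_Icc_left hab))

/-- Uniqueness of the Godunov-flux value. -/
lemma godunov_value_unique {N : ℕ} (H : Fin N → ℝ → ℝ) (hc : ∀ α, Continuous (H α))
    (F0 : (Fin N → ℝ) → ℝ) (hmono : Antitone F0) (p s s' : Fin N → ℝ)
    (hs : ∀ α, F0 s = godunov (H α) (s α) (p α))
    (hs' : ∀ α, F0 s' = godunov (H α) (s' α) (p α)) : F0 s = F0 s' := by
  have key : ∀ t t' : Fin N → ℝ, (∀ α, F0 t = godunov (H α) (t α) (p α)) →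
      (∀ α, F0 t' = godunov (H α) (t' α) (p α)) → F0 t < F0 t' → False := by
    intro t t' ht ht' hlt
    have hle : t ≤ t' := by
      intro α
      by_contra hcon
      have h1 : t' α ≤ t α := le_of_not_ge hcon
      have := godunov_mono_s6 (hc α) (p α) h1
      rw [← ht α, ← ht' α] at this
      exact absurd (hlt.trans_le this) (lt_irrefl _)
    exact absurd (hlt.trans_le (hmono hle)) (lt_irrefl _)
  rcases lt_trichotomy (F0 s) (F0 s') with h | h | h
  · exact absurd (key s s' hs hs' h) (fun x => x)
  · exact h
  · exact absurd (key s' s hs' hs h) (fun x => x)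

end Helpers

theorem composition_of_godunov_semi_fluxes
    (N : ℕ) (hN : 1 ≤ N)
    (H : Fin N → ℝ → ℝ)
    (hHcont : ∀ α, Continuous (H α))
    (hHcoer : ∀ α, CoerciveHam (H α))
    (F0 : (Fin N → ℝ) → ℝ)
    (hF0cont : Continuous F0)
    (hF0mono : Antitone F0)
    (hF0sc : IsSemiCoercive F0) :
    (∀ F1 : (Fin N → ℝ) → ℝ,
      (∀ pt : Fin N → ℝ, ∃ q : Fin N → ℝ, UpperGodunovRel H F0 pt q ∧ F1 pt = F0 q) →
      ∀ p r s : Fin N → ℝ,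
        LowerGodunovRel H F1 p r →
        (∀ α, F0 s = godunov (H α) (s α) (p α)) →
        F1 r = F0 s) ∧
    (∀ F2 : (Fin N → ℝ) → ℝ,
      (∀ pt : Fin N → ℝ, ∃ q : Fin N → ℝ, LowerGodunovRel H F0 pt q ∧ F2 pt = F0 q) →
      ∀ p r s : Fin N → ℝ,
        UpperGodunovRel H F2 p r →
        (∀ α, F0 s = godunov (H α) (s α) (p α)) →
        F2 r = F0 s) := by
  constructor
  · -- first part: F1 = F0 ∘ upper-Godunov
    intro F1 hF1 p r s hlow hgod
    obtain ⟨q, hq, hF1r⟩ := hF1 r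
    rw [hF1r]
    refine godunov_value_unique H hHcont F0 hF0mono p q s ?_ hgod
    intro α
    have hc := hHcont α
    rcases hlow α with ⟨hba, hle⟩ | ⟨hab, hsup⟩
    · -- r α = p α, F1 r ≤ H α (p α)
      rcases hq α with ⟨hcb, hge⟩ | ⟨hcb, hinf⟩
      · -- q α = r α = p α
        have hca : q α = p α := hcb.trans hba
        rw [hca, godunov_self]
        rw [hba] at hge
        rw [hF1r] at hle
        exact le_antisymm hle hge
      · -- q α < r α = p α
        have hca : q α < p α := hba ▸ hcb
        rw [godunov, if_neg (not_le.2 hca), ← hba]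
        exact hinf
    · -- p α < r α, F1 r = sSup (H α '' Icc (p α) (r α))
      rw [hF1r] at hsup
      rcases hq α with ⟨hcb, _⟩ | ⟨hcb, hinf⟩
      · -- q α = r α
        rw [godunov, if_pos (hcb ▸ hab.le), hcb]
        exact hsup
      · -- q α < r α, F0 q = sInf (H α '' Icc (q α) (r α))
        by_cases hac : p α ≤ q α
        · rw [godunov, if_pos hac]
          refine le_antisymm ?_ (sSup_img_le hac ?_)
          · calc F0 q = sInf (H α '' Icc (q α) (r α)) := hinf
              _ ≤ H α (q α) := sInf_img_le hc ⟨le_refl _, hcb.le⟩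
              _ ≤ sSup (H α '' Icc (p α) (q α)) := le_sSup_img hc ⟨hac, le_refl _⟩
          · intro x hx
            calc H α x ≤ sSup (H α '' Icc (p α) (r α)) :=
                  le_sSup_img hc ⟨hx.1, hx.2.trans hcb.le⟩
              _ = F0 q := hsup.symm
        · have hca : q α < p α := not_le.1 hac
          rw [godunov, if_neg (not_le.2 hca)]
          refine le_antisymm (le_sInf_img hca.le ?_) ?_
          · intro x hx
            calc F0 q = sInf (H α '' Icc (q α) (r α)) := hinf
              _ ≤ H α x := sInf_img_le hc ⟨hx.1, hx.2.trans hab.le⟩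
          · calc sInf (H α '' Icc (q α) (p α)) ≤ H α (p α) :=
                sInf_img_le hc ⟨hca.le, le_refl _⟩
              _ ≤ sSup (H α '' Icc (p α) (r α)) := le_sSup_img hc ⟨le_refl _, hab.le⟩
              _ = F0 q := hsup.symm
  · -- second part: F2 = F0 ∘ lower-Godunov
    intro F2 hF2 p r s hupp hgod
    obtain ⟨q, hq, hF2r⟩ := hF2 r
    rw [hF2r]
    refine godunov_value_unique H hHcont F0 hF0mono p q s ?_ hgod
    intro α
    have hc := hHcont α
    rcases hupp α with ⟨hba, hge⟩ | ⟨hba, hinf⟩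
    · -- r α = p α, H α (p α) ≤ F2 r
      rcases hq α with ⟨hcb, hle⟩ | ⟨hcb, hsup⟩
      · -- q α = r α = p α
        have hca : q α = p α := hcb.trans hba
        rw [hca, godunov_self]
        rw [hba] at hle
        rw [hF2r] at hge
        exact le_antisymm hle hge
      · -- r α < q α
        have hca : p α < q α := hba ▸ hcb
        rw [godunov, if_pos hca.le, ← hba]
        exact hsup
    · -- r α < p α, F2 r = sInf (H α '' Icc (r α) (p α))
      rw [hF2r] at hinf
      rcases hq α with ⟨hcb, _⟩ | ⟨hcb, hsup⟩
      · -- q α = r α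
        rw [godunov, if_neg (not_le.2 (hcb ▸ hba)), hcb]
        exact hinf
      · -- r α < q α, F0 q = sSup (H α '' Icc (r α) (q α))
        by_cases hac : p α ≤ q α
        · rw [godunov, if_pos hac]
          refine le_antisymm ?_ (sSup_img_le hac ?_)
          · calc F0 q = sInf (H α '' Icc (r α) (p α)) := hinf
              _ ≤ H α (p α) := sInf_img_le hc ⟨hba.le, le_refl _⟩
              _ ≤ sSup (H α '' Icc (p α) (q α)) := le_sSup_img hc ⟨le_refl _, hac⟩
          · intro x hx
            calc H α x ≤ sSup (H α '' Icc (r α) (q α)) :=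
                  le_sSup_img hc ⟨hba.le.trans hx.1, hx.2⟩
              _ = F0 q := hsup.symm
        · have hca : q α < p α := not_le.1 hac
          rw [godunov, if_neg (not_le.2 hca)]
          refine le_antisymm (le_sInf_img hca.le ?_) ?_
          · intro x hx
            calc F0 q = sInf (H α '' Icc (r α) (p α)) := hinf
              _ ≤ H α x := sInf_img_le hc ⟨hcb.le.trans hx.1, hx.2⟩
          · calc sInf (H α '' Icc (q α) (p α)) ≤ H α (q α) :=
                sInf_img_le hc ⟨le_refl _, hca.le⟩
              _ ≤ sSup (H α '' Icc (r α) (q α)) := le_sSup_img hc ⟨hcb.le, le_refl _⟩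
              _ = F0 q := hsup.symm
end
end

section
/- For all q, p ∈ ℝ: (i) there exists q̃ ∈ ℝ such that Ḡ(q, q̃) ∩ G̲(q̃, p) ≠ ∅, and moreover for every q̃ ∈ ℝ with Ḡ(q, q̃) ∩ G̲(q̃, p) ≠ ∅ one has Ḡ(q, q̃) ∩ G̲(q̃, p) = {G(q,p)}; (ii) there exists q̃ ∈ ℝ such that G̲(q, q̃) ∩ Ḡ(q̃, p) ≠ ∅, and for every such q̃ one has G̲(q, q̃) ∩ Ḡ(q̃, p) = {G(q,p)} (singletons in the extended reals, with G(q,p) viewed as an extended real). -/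
open Set

noncomputable section

/-- Lower Godunov semi-flux, as a subset of the extended reals. -/
def GlowSet (h : ℝ → ℝ) (q p : ℝ) : Set EReal :=
  if q < p then {⊥}
  else if q = p then Iic ((h p : ℝ) : EReal)
  else {((sSup (h '' Icc p q) : ℝ) : EReal)}

/-- Upper Godunov semi-flux, as a subset of the extended reals. -/
def GupSet (h : ℝ → ℝ) (q p : ℝ) : Set EReal :=
  if q < p then {((sInf (h '' Icc q p) : ℝ) : EReal)}
  else if q = p then Ici ((h p : ℝ) : EReal)
  else {⊤}

section aux
variable {h : ℝ → ℝ}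

lemma bddA (hc : Continuous h) (a b : ℝ) : BddAbove (h '' Icc a b) :=
  (isCompact_Icc.image hc).bddAbove

lemma bddB (hc : Continuous h) (a b : ℝ) : BddBelow (h '' Icc a b) :=
  (isCompact_Icc.image hc).bddBelow

lemma sSup_img_self (a : ℝ) : sSup (h '' Icc a a) = h a := by
  rw [Icc_self, image_singleton, csSup_singleton]

lemma sInf_img_self (a : ℝ) : sInf (h '' Icc a a) = h a := by
  rw [Icc_self, image_singleton, csInf_singleton]

lemma sSup_right (hc : Continuous h) {a b c : ℝ} (hab : a ≤ b) (hbc : b ≤ c) :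
    sSup (h '' Icc a b) ≤ sSup (h '' Icc a c) :=
  csSup_le_csSup (bddA hc a c) ((nonempty_Icc.2 hab).image h)
    (image_mono (Icc_subset_Icc_right hbc))

lemma sSup_left (hc : Continuous h) {a b c : ℝ} (hab : a ≤ b) (hbc : b ≤ c) :
    sSup (h '' Icc b c) ≤ sSup (h '' Icc a c) :=
  csSup_le_csSup (bddA hc a c) ((nonempty_Icc.2 hbc).image h)
    (image_mono (Icc_subset_Icc_left hab))

lemma sInf_left (hc : Continuous h) {a b c : ℝ} (hab : a ≤ b) (hbc : b ≤ c) :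
    sInf (h '' Icc a c) ≤ sInf (h '' Icc b c) :=
  csInf_le_csInf (bddB hc a c) ((nonempty_Icc.2 hbc).image h)
    (image_mono (Icc_subset_Icc_left hab))

lemma sInf_right (hc : Continuous h) {a b c : ℝ} (hab : a ≤ b) (hbc : b ≤ c) :
    sInf (h '' Icc a c) ≤ sInf (h '' Icc a b) :=
  csInf_le_csInf (bddB hc a c) ((nonempty_Icc.2 hab).image h)
    (image_mono (Icc_subset_Icc_right hbc))

end aux

theorem key_composition_result
    (H : ℝ → ℝ)
    (hHcont : Continuous H)
    (hHcoer : CoerciveHam H) :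
    ∀ q p : ℝ,
      ((∃ qt : ℝ, (GupSet H q qt ∩ GlowSet H qt p).Nonempty) ∧
        (∀ qt : ℝ, (GupSet H q qt ∩ GlowSet H qt p).Nonempty →
          GupSet H q qt ∩ GlowSet H qt p = {((godunov H q p : ℝ) : EReal)})) ∧
      ((∃ qt : ℝ, (GlowSet H q qt ∩ GupSet H qt p).Nonempty) ∧
        (∀ qt : ℝ, (GlowSet H q qt ∩ GupSet H qt p).Nonempty →
          GlowSet H q qt ∩ GupSet H qt p = {((godunov H q p : ℝ) : EReal)})) := by

  intro q p
  constructor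
  · constructor
    · -- existence for part (i)
      rcases le_or_gt q p with hqp | hpq
      · refine ⟨p, ((sInf (H '' Icc q p) : ℝ) : EReal), ?_, ?_⟩
        · rcases eq_or_lt_of_le hqp with h | h
          · subst h
            rw [GupSet, if_neg (lt_irrefl q), if_pos rfl]
            simp [sInf_img_self]
          · rw [GupSet, if_pos h]
            exact rfl
        · rw [GlowSet, if_neg (lt_irrefl p), if_pos rfl]
          exact EReal.coe_le_coe_iff.2 (sInf_img_le hHcont ⟨hqp, le_refl p⟩)
      · refine ⟨q, ((sSup (H '' Icc p q) : ℝ) : EReal), ?_, ?_⟩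
        · rw [GupSet, if_neg (lt_irrefl q), if_pos rfl]
          exact EReal.coe_le_coe_iff.2 (le_sSup_img hHcont ⟨hpq.le, le_refl q⟩)
        · rw [GlowSet, if_neg (not_lt.2 hpq.le), if_neg (ne_of_gt hpq)]
          exact rfl
    · -- uniqueness for part (i)
      rintro qt ⟨x, hxu, hxl⟩
      rcases lt_trichotomy q qt with h1 | h1 | h1
      · rw [GupSet, if_pos h1] at hxu ⊢
        rw [mem_singleton_iff] at hxu
        rcases lt_trichotomy qt p with h2 | h2 | h2
        · rw [GlowSet, if_pos h2, mem_singleton_iff] at hxl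
          exact absurd (hxu.symm.trans hxl) (EReal.coe_ne_bot _)
        · subst h2
          rw [GlowSet, if_neg (lt_irrefl qt), if_pos rfl] at hxl ⊢
          rw [godunov, if_neg (not_le.2 h1)]
          exact inter_eq_self_of_subset_left (singleton_subset_iff.2
            (mem_Iic.2 (EReal.coe_le_coe_iff.2
              (sInf_img_le hHcont ⟨h1.le, le_refl qt⟩))))
        · rw [GlowSet, if_neg (not_lt.2 h2.le), if_neg (ne_of_gt h2)] at hxl ⊢
          rw [mem_singleton_iff] at hxl
          have hAB : sInf (H '' Icc q qt) = sSup (H '' Icc p qt) :=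
            EReal.coe_injective (hxu.symm.trans hxl)
          rcases le_or_gt p q with hpq | hqp
          · have hG : sSup (H '' Icc p q) = sInf (H '' Icc q qt) := by
              refine le_antisymm ?_ ?_
              · rw [hAB]; exact sSup_right hHcont hpq h1.le
              · exact le_trans (sInf_img_le hHcont ⟨le_refl q, h1.le⟩)
                  (le_sSup_img hHcont ⟨hpq, le_refl q⟩)
            rw [godunov, if_pos hpq, hG, hAB, inter_self]
          · have hG : sInf (H '' Icc q p) = sInf (H '' Icc q qt) := by
              refine le_antisymm ?_ (sInf_right hHcont hqp.le h2.le)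
              · rw [hAB]
                exact le_trans (sInf_img_le hHcont ⟨hqp.le, le_refl p⟩)
                  (le_sSup_img hHcont ⟨le_refl p, h2.le⟩)
            rw [godunov, if_neg (not_le.2 hqp), hG, hAB, inter_self]
      · subst h1
        rw [GupSet, if_neg (lt_irrefl q), if_pos rfl] at hxu ⊢
        rcases lt_trichotomy q p with h2 | h2 | h2
        · rw [GlowSet, if_pos h2, mem_singleton_iff] at hxl
          rw [hxl, mem_Ici] at hxu
          exact absurd (le_bot_iff.1 hxu) (EReal.coe_ne_bot _)
        · subst h2
          rw [GlowSet, if_neg (lt_irrefl q), if_pos rfl] at hxl ⊢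
          rw [godunov, if_pos (le_refl q), sSup_img_self, Ici_inter_Iic, Icc_self]
        · rw [GlowSet, if_neg (not_lt.2 h2.le), if_neg (ne_of_gt h2)] at hxl ⊢
          rw [godunov, if_pos h2.le]
          exact inter_eq_self_of_subset_right (singleton_subset_iff.2
            (mem_Ici.2 (EReal.coe_le_coe_iff.2
              (le_sSup_img hHcont ⟨h2.le, le_refl q⟩))))
      · rw [GupSet, if_neg (not_lt.2 h1.le), if_neg (ne_of_gt h1),
          mem_singleton_iff] at hxu
        rcases lt_trichotomy qt p with h2 | h2 | h2
        · rw [GlowSet, if_pos h2, mem_singleton_iff] at hxl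
          exact absurd (hxu.symm.trans hxl) bot_ne_top.symm
        · subst h2
          rw [GlowSet, if_neg (lt_irrefl qt), if_pos rfl, hxu, mem_Iic] at hxl
          exact absurd (top_le_iff.1 hxl) (EReal.coe_ne_top _)
        · rw [GlowSet, if_neg (not_lt.2 h2.le), if_neg (ne_of_gt h2),
            mem_singleton_iff] at hxl
          exact absurd (hxu.symm.trans hxl) (EReal.coe_ne_top _).symm
  · constructor
    · -- existence for part (ii)
      rcases le_or_gt p q with hpq | hqp
      · refine ⟨p, ((sSup (H '' Icc p q) : ℝ) : EReal), ?_, ?_⟩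
        · rcases eq_or_lt_of_le hpq with h | h
          · subst h
            rw [GlowSet, if_neg (lt_irrefl _), if_pos rfl]
            simp [sSup_img_self]
          · rw [GlowSet, if_neg (not_lt.2 h.le), if_neg (ne_of_gt h)]
            exact rfl
        · rw [GupSet, if_neg (lt_irrefl p), if_pos rfl]
          exact EReal.coe_le_coe_iff.2 (le_sSup_img hHcont ⟨le_refl p, hpq⟩)
      · refine ⟨q, ((sInf (H '' Icc q p) : ℝ) : EReal), ?_, ?_⟩
        · rw [GlowSet, if_neg (lt_irrefl q), if_pos rfl]
          exact EReal.coe_le_coe_iff.2 (sInf_img_le hHcont ⟨le_refl q, hqp.le⟩)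
        · rw [GupSet, if_pos hqp]
          exact rfl
    · -- uniqueness for part (ii)
      rintro qt ⟨x, hxl, hxu⟩
      rcases lt_trichotomy q qt with h1 | h1 | h1
      · rw [GlowSet, if_pos h1, mem_singleton_iff] at hxl
        rcases lt_trichotomy qt p with h2 | h2 | h2
        · rw [GupSet, if_pos h2, mem_singleton_iff] at hxu
          exact absurd (hxl.symm.trans hxu) (EReal.coe_ne_bot _).symm
        · subst h2
          rw [GupSet, if_neg (lt_irrefl qt), if_pos rfl, hxl, mem_Ici] at hxu
          exact absurd (le_bot_iff.1 hxu) (EReal.coe_ne_bot _)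
        · rw [GupSet, if_neg (not_lt.2 h2.le), if_neg (ne_of_gt h2),
            mem_singleton_iff] at hxu
          exact absurd (hxl.symm.trans hxu) bot_ne_top
      · subst h1
        rw [GlowSet, if_neg (lt_irrefl q), if_pos rfl] at hxl ⊢
        rcases lt_trichotomy q p with h2 | h2 | h2
        · rw [GupSet, if_pos h2] at hxu ⊢
          rw [godunov, if_neg (not_le.2 h2)]
          exact inter_eq_self_of_subset_right (singleton_subset_iff.2
            (mem_Iic.2 (EReal.coe_le_coe_iff.2
              (sInf_img_le hHcont ⟨le_refl q, h2.le⟩))))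
        · subst h2
          rw [GupSet, if_neg (lt_irrefl q), if_pos rfl] at hxu ⊢
          rw [godunov, if_pos (le_refl q), sSup_img_self, inter_comm,
            Ici_inter_Iic, Icc_self]
        · rw [GupSet, if_neg (not_lt.2 h2.le), if_neg (ne_of_gt h2),
            mem_singleton_iff] at hxu
          rw [hxu, mem_Iic] at hxl
          exact absurd (top_le_iff.1 hxl) (EReal.coe_ne_top _)
      · rw [GlowSet, if_neg (not_lt.2 h1.le), if_neg (ne_of_gt h1)] at hxl ⊢
        rw [mem_singleton_iff] at hxl
        rcases lt_trichotomy qt p with h2 | h2 | h2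
        · rw [GupSet, if_pos h2] at hxu ⊢
          rw [mem_singleton_iff] at hxu
          have hAB : sSup (H '' Icc qt q) = sInf (H '' Icc qt p) :=
            EReal.coe_injective (hxl.symm.trans hxu)
          rcases le_or_gt p q with hpq | hqp
          · have hG : sSup (H '' Icc p q) = sSup (H '' Icc qt q) := by
              refine le_antisymm (sSup_left hHcont h2.le hpq) ?_
              · rw [hAB]
                exact le_trans (sInf_img_le hHcont ⟨h2.le, le_refl p⟩)
                  (le_sSup_img hHcont ⟨le_refl p, hpq⟩)
            rw [godunov, if_pos hpq, hG, hAB, inter_self]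
          · have hG : sInf (H '' Icc q p) = sInf (H '' Icc qt p) := by
              refine le_antisymm ?_ (sInf_left hHcont h1.le hqp.le)
              · rw [← hAB]
                exact le_trans (sInf_img_le hHcont ⟨le_refl q, hqp.le⟩)
                  (le_sSup_img hHcont ⟨h1.le, le_refl q⟩)
            rw [godunov, if_neg (not_le.2 hqp), hG, hAB, inter_self]
        · subst h2
          rw [GupSet, if_neg (lt_irrefl qt), if_pos rfl] at hxu ⊢
          rw [godunov, if_pos h1.le]
          exact inter_eq_self_of_subset_left (singleton_subset_iff.2
            (mem_Ici.2 (EReal.coe_le_coe_iff.2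
              (le_sSup_img hHcont ⟨le_refl qt, h1.le⟩))))
        · rw [GupSet, if_neg (not_lt.2 h2.le), if_neg (ne_of_gt h2),
            mem_singleton_iff] at hxu
          exact absurd (hxl.symm.trans hxu) (EReal.coe_ne_top _)
end
end

section
/- Suppose F_0 is semi-coercive. Then for every p ∈ ℝ^N and every q ∈ ℝ^N satisfying the lower Godunov relation for F_0 at p, one has (R̲F_0)(p) = F_0(q); and for every q ∈ ℝ^N satisfying the upper Godunov relation for F_0 at p, one has (R̄F_0)(p) = F_0(q). (That is, R̲F_0 = F_0G̲ and R̄F_0 = F_0Ḡ.) -/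
open Set

noncomputable section

theorem semi_relaxations_are_godunov_semi_relaxations
    (N : ℕ) (hN : 1 ≤ N)
    (H : Fin N → ℝ → ℝ)
    (hHcont : ∀ α, Continuous (H α))
    (hHcoer : ∀ α, CoerciveHam (H α))
    (F0 : (Fin N → ℝ) → ℝ)
    (hF0cont : Continuous F0)
    (hF0mono : Antitone F0)
    (hF0sc : IsSemiCoercive F0) :
    (∀ p q : Fin N → ℝ, LowerGodunovRel H F0 p q → Rsub H F0 p = F0 q) ∧
    (∀ p q : Fin N → ℝ, UpperGodunovRel H F0 p q → Rsup H F0 p = F0 q) := by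
  haveI : Nonempty (Fin N) := Fin.pos_iff_nonempty.mp hN
  constructor
  · intro p q hG
    have hpq : p ≤ q := fun α => by
      rcases hG α with ⟨h1, _⟩ | ⟨h1, _⟩
      · exact h1.ge
      · exact h1.le
    obtain ⟨r, hr, hrmax⟩ : ∃ r : Fin N → ℝ, (∀ α, r α ∈ Icc (p α) (q α)) ∧
        ∀ α, ∀ y ∈ Icc (p α) (q α), H α y ≤ H α (r α) := by
      have hex : ∀ α, ∃ x ∈ Icc (p α) (q α), ∀ y ∈ Icc (p α) (q α), H α y ≤ H α x := by
        intro α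
        obtain ⟨x, hx, hxm⟩ := isCompact_Icc.exists_isMaxOn (nonempty_Icc.mpr (hpq α))
          (hHcont α).continuousOn
        exact ⟨x, hx, fun y hy => hxm hy⟩
      choose r hr1 hr2 using hex
      exact ⟨r, hr1, hr2⟩
    have hub : ∀ v ∈ {v : ℝ | ∃ q' : Fin N → ℝ, p ≤ q' ∧ v = min (F0 q') (Hmin H q')},
        v ≤ F0 q := by
      rintro v ⟨q', hq', rfl⟩
      by_cases hc : q ≤ q'
      · exact (min_le_left _ _).trans (hF0mono hc)
      · simp only [Pi.le_def, not_forall, not_le] at hc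
        obtain ⟨α, hα⟩ := hc
        rcases hG α with ⟨h1, _⟩ | ⟨h1, h2⟩
        · rw [h1] at hα
          exact absurd (hq' α) hα.not_ge
        · calc min (F0 q') (Hmin H q') ≤ Hmin H q' := min_le_right _ _
            _ ≤ H α (q' α) := ciInf_le (Set.Finite.bddBelow (Set.finite_range _)) α
            _ ≤ sSup (H α '' Icc (p α) (q α)) :=
                le_csSup ((isCompact_Icc.image (hHcont α)).bddAbove)
                  ⟨q' α, ⟨hq' α, hα.le⟩, rfl⟩
            _ = F0 q := h2.symm
    have hval : F0 q ≤ min (F0 r) (Hmin H r) := by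
      apply le_min
      · exact hF0mono fun α => (hr α).2
      · apply le_ciInf
        intro α
        rcases hG α with ⟨h1, h2⟩ | ⟨h1, h2⟩
        · have : r α = p α := by
            have h := hr α
            rw [h1] at h
            exact le_antisymm h.2 h.1
          rw [this]; exact h2
        · rw [h2]
          exact csSup_le ((nonempty_Icc.mpr (hpq α)).image _)
            (by rintro b ⟨y, hy, rfl⟩; exact hrmax α y hy)
    rw [Rsub]
    refine le_antisymm (csSup_le ⟨_, q, hpq, rfl⟩ hub) (hval.trans ?_)
    exact le_csSup ⟨F0 q, hub⟩ ⟨r, fun α => (hr α).1, rfl⟩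
  · intro p q hG
    have hqp : q ≤ p := fun α => by
      rcases hG α with ⟨h1, _⟩ | ⟨h1, _⟩
      · exact h1.le
      · exact h1.le
    obtain ⟨r, hr, hrmin⟩ : ∃ r : Fin N → ℝ, (∀ α, r α ∈ Icc (q α) (p α)) ∧
        ∀ α, ∀ y ∈ Icc (q α) (p α), H α (r α) ≤ H α y := by
      have hex : ∀ α, ∃ x ∈ Icc (q α) (p α), ∀ y ∈ Icc (q α) (p α), H α x ≤ H α y := by
        intro α
        obtain ⟨x, hx, hxm⟩ := isCompact_Icc.exists_isMinOn (nonempty_Icc.mpr (hqp α))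
          (hHcont α).continuousOn
        exact ⟨x, hx, fun y hy => hxm hy⟩
      choose r hr1 hr2 using hex
      exact ⟨r, hr1, hr2⟩
    have hlb : ∀ v ∈ {v : ℝ | ∃ q' : Fin N → ℝ, q' ≤ p ∧ v = max (F0 q') (Hmax H q')},
        F0 q ≤ v := by
      rintro v ⟨q', hq', rfl⟩
      by_cases hc : q' ≤ q
      · exact (hF0mono hc).trans (le_max_left _ _)
      · simp only [Pi.le_def, not_forall, not_le] at hc
        obtain ⟨α, hα⟩ := hc
        rcases hG α with ⟨h1, _⟩ | ⟨h1, h2⟩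
        · rw [h1] at hα
          exact absurd (hq' α) hα.not_ge
        · calc F0 q = sInf (H α '' Icc (q α) (p α)) := h2
            _ ≤ H α (q' α) :=
                csInf_le ((isCompact_Icc.image (hHcont α)).bddBelow)
                  ⟨q' α, ⟨hα.le, hq' α⟩, rfl⟩
            _ ≤ Hmax H q' := le_ciSup (Set.Finite.bddAbove (Set.finite_range fun β => H β (q' β))) α
            _ ≤ max (F0 q') (Hmax H q') := le_max_right _ _
    have hval : max (F0 r) (Hmax H r) ≤ F0 q := by
      apply max_le
      · exact hF0mono fun α => (hr α).1
      · apply ciSup_le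
        intro α
        rcases hG α with ⟨h1, h2⟩ | ⟨h1, h2⟩
        · have : r α = p α := by
            have h := hr α
            rw [h1] at h
            exact le_antisymm h.2 h.1
          rw [this]; exact h2
        · rw [h2]
          exact le_csInf ((nonempty_Icc.mpr (hqp α)).image _)
            (by rintro b ⟨y, hy, rfl⟩; exact hrmin α y hy)
    rw [Rsup]
    refine le_antisymm ?_ (le_csInf ⟨_, ⟨q, hqp, rfl⟩⟩ hlb)
    calc sInf {v : ℝ | ∃ q' : Fin N → ℝ, q' ≤ p ∧ v = max (F0 q') (Hmax H q')}
        ≤ max (F0 r) (Hmax H r) :=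
          csInf_le ⟨F0 q, hlb⟩ ⟨r, fun α => (hr α).2, rfl⟩
      _ ≤ F0 q := hval
end
end

section
/- The semi-relaxation operators are projectors: R̲(R̲F_0) = R̲F_0 and R̄(R̄F_0) = R̄F_0 pointwise on ℝ^N. -/
open Set

noncomputable section

theorem semi_relaxations_are_projectors
    (N : ℕ) (hN : 1 ≤ N)
    (H : Fin N → ℝ → ℝ)
    (hHcont : ∀ α, Continuous (H α))
    (hHcoer : ∀ α, CoerciveHam (H α))
    (F0 : (Fin N → ℝ) → ℝ)
    (hF0cont : Continuous F0)
    (hF0mono : Antitone F0) :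
    (∀ p : Fin N → ℝ, Rsub H (Rsub H F0) p = Rsub H F0 p) ∧
    (∀ p : Fin N → ℝ, Rsup H (Rsup H F0) p = Rsup H F0 p) := by
  constructor
  · -- sub-relaxation
    set G := Rsub H F0 with hG
    have hne : ∀ (F : (Fin N → ℝ) → ℝ) (r : Fin N → ℝ),
        {v : ℝ | ∃ q : Fin N → ℝ, r ≤ q ∧ v = min (F q) (Hmin H q)}.Nonempty :=
      fun F r => ⟨_, r, le_refl r, rfl⟩
    have hbdd0 : ∀ r : Fin N → ℝ,
        BddAbove {v : ℝ | ∃ q : Fin N → ℝ, r ≤ q ∧ v = min (F0 q) (Hmin H q)} := by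
      intro r
      refine ⟨F0 r, ?_⟩
      rintro v ⟨q, hq, rfl⟩
      exact le_trans (min_le_left _ _) (hF0mono hq)
    have hGle : ∀ q : Fin N → ℝ, min (F0 q) (Hmin H q) ≤ G q := fun q =>
      le_csSup (hbdd0 q) ⟨q, le_refl q, rfl⟩
    have hGanti : ∀ {r r' : Fin N → ℝ}, r ≤ r' → G r' ≤ G r := by
      intro r r' h
      exact csSup_le_csSup (hbdd0 r) (hne F0 r')
        (by rintro v ⟨q, hq, rfl⟩; exact ⟨q, le_trans h hq, rfl⟩)
    have hbddG : ∀ r : Fin N → ℝ,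
        BddAbove {v : ℝ | ∃ q : Fin N → ℝ, r ≤ q ∧ v = min (G q) (Hmin H q)} := by
      intro r
      refine ⟨G r, ?_⟩
      rintro v ⟨q, hq, rfl⟩
      exact le_trans (min_le_left _ _) (hGanti hq)
    intro p
    apply le_antisymm
    · apply csSup_le (hne G p)
      rintro v ⟨q, hq, rfl⟩
      exact le_trans (min_le_left _ _) (hGanti hq)
    · apply csSup_le (hne F0 p)
      rintro v ⟨q, hq, rfl⟩
      have h1 : min (F0 q) (Hmin H q) ≤ min (G q) (Hmin H q) :=
        le_min (hGle q) (min_le_right _ _)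
      exact le_trans h1 (le_csSup (hbddG p) ⟨q, hq, rfl⟩)
  · -- super-relaxation
    set G := Rsup H F0 with hG
    have hne : ∀ (F : (Fin N → ℝ) → ℝ) (r : Fin N → ℝ),
        {v : ℝ | ∃ q : Fin N → ℝ, q ≤ r ∧ v = max (F q) (Hmax H q)}.Nonempty :=
      fun F r => ⟨_, r, le_refl r, rfl⟩
    have hbdd0 : ∀ r : Fin N → ℝ,
        BddBelow {v : ℝ | ∃ q : Fin N → ℝ, q ≤ r ∧ v = max (F0 q) (Hmax H q)} := by
      intro r
      refine ⟨F0 r, ?_⟩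
      rintro v ⟨q, hq, rfl⟩
      exact le_trans (hF0mono hq) (le_max_left _ _)
    have hGle : ∀ q : Fin N → ℝ, G q ≤ max (F0 q) (Hmax H q) := fun q =>
      csInf_le (hbdd0 q) ⟨q, le_refl q, rfl⟩
    have hGanti : ∀ {r r' : Fin N → ℝ}, r ≤ r' → G r' ≤ G r := by
      intro r r' h
      exact csInf_le_csInf (hbdd0 r') (hne F0 r)
        (by rintro v ⟨q, hq, rfl⟩; exact ⟨q, le_trans hq h, rfl⟩)
    have hbddG : ∀ r : Fin N → ℝ,
        BddBelow {v : ℝ | ∃ q : Fin N → ℝ, q ≤ r ∧ v = max (G q) (Hmax H q)} := by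
      intro r
      refine ⟨G r, ?_⟩
      rintro v ⟨q, hq, rfl⟩
      exact le_trans (hGanti hq) (le_max_left _ _)
    intro p
    apply le_antisymm
    · apply le_csInf (hne F0 p)
      rintro v ⟨q, hq, rfl⟩
      have h1 : max (G q) (Hmax H q) ≤ max (F0 q) (Hmax H q) :=
        max_le (hGle q) (le_max_right _ _)
      exact le_trans (csInf_le (hbddG p) ⟨q, hq, rfl⟩) h1
    · apply le_csInf (hne G p)
      rintro v ⟨q, hq, rfl⟩
      exact le_trans (hGanti hq) (le_max_left _ _)
end
end

section
/- Characterization of sub-relaxation: for p ∈ ℝ^N define p̄ ∈ ℝ^N by p̄^α = p^α if H^α(p^α) ≥ F_0(p), and p̄^α = sup{ q^α ≥ p^α : H^α(r) < F_0(p) for all r ∈ [p^α, q^α) } if H^α(p^α) < F_0(p) (this supremum is finite by coercivity of H^α). Then F_0 = R̲F_0 if and only if for every p ∈ ℝ^N, F_0(q) = F_0(p) for all q in the box [p, p̄] = ∏_α [p^α, p̄^α]. -/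
open Set

noncomputable section

/-- The upper point `p̄^α` from the characterization of sub-relaxation:
`p̄^α = p^α` if `H^α(p^α) ≥ c := F₀(p)`, otherwise the supremum of the `q^α ≥ p^α` such
that `H^α < c` on `[p^α, q^α)`. -/
def pbarUp (h : ℝ → ℝ) (c pa : ℝ) : ℝ :=
  if c ≤ h pa then pa
  else sSup {qa : ℝ | pa ≤ qa ∧ ∀ r : ℝ, pa ≤ r → r < qa → h r < c}

namespace PbarAux

variable {h : ℝ → ℝ} {c pa : ℝ}

lemma mem_pbar_set : pa ∈ {qa : ℝ | pa ≤ qa ∧ ∀ r : ℝ, pa ≤ r → r < qa → h r < c} :=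
  ⟨le_rfl, fun r h1 h2 => absurd (h1.trans_lt h2) (lt_irrefl _)⟩

lemma bddAbove_pbar_set (hcoer : CoerciveHam h) :
    BddAbove {qa : ℝ | pa ≤ qa ∧ ∀ r : ℝ, pa ≤ r → r < qa → h r < c} := by
  obtain ⟨R, hR⟩ := hcoer c
  refine ⟨max R pa, fun qa hqa => ?_⟩
  by_contra hlt
  push_neg at hlt
  have h1 : pa ≤ max R pa := le_max_right _ _
  have h2 : h (max R pa) < c := hqa.2 _ h1 hlt
  have h3 : c ≤ h (max R pa) := hR _ (le_trans (le_max_left _ _) (le_abs_self _))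
  linarith

lemma le_pbarUp (hcoer : CoerciveHam h) : pa ≤ pbarUp h c pa := by
  rw [pbarUp]
  split_ifs with hc
  · exact le_rfl
  · exact le_csSup (bddAbove_pbar_set hcoer) mem_pbar_set

lemma lt_of_lt_pbarUp {r : ℝ} (h1 : pa ≤ r)
    (h2 : r < pbarUp h c pa) : h r < c := by
  rw [pbarUp] at h2
  split_ifs at h2 with hc
  · exact absurd (h1.trans_lt h2) (lt_irrefl _)
  · obtain ⟨qa, hqa, hrq⟩ := exists_lt_of_lt_csSup ⟨pa, mem_pbar_set⟩ h2
    exact hqa.2 r h1 hrq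

lemma c_le_pbarUp (hcont : Continuous h) (hcoer : CoerciveHam h) :
    c ≤ h (pbarUp h c pa) := by
  rw [pbarUp]
  split_ifs with hc
  · exact hc
  · by_contra hlt
    push_neg at hlt
    set S := {qa : ℝ | pa ≤ qa ∧ ∀ r : ℝ, pa ≤ r → r < qa → h r < c} with hS
    set b := sSup S with hb
    have hopen : IsOpen {x : ℝ | h x < c} := isOpen_lt hcont continuous_const
    obtain ⟨ε, hε, hball⟩ := Metric.isOpen_iff.mp hopen b hlt
    have hbpa : pa ≤ b := le_csSup (bddAbove_pbar_set hcoer) mem_pbar_set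
    have hmem : b + ε / 2 ∈ S := by
      refine ⟨by linarith, fun r h1 h2 => ?_⟩
      rcases lt_or_ge r b with h3 | h3
      · obtain ⟨qa, hqa, hrq⟩ := exists_lt_of_lt_csSup ⟨pa, mem_pbar_set⟩ h3
        exact hqa.2 r h1 hrq
      · apply hball
        rw [Metric.mem_ball, Real.dist_eq, abs_lt]
        constructor <;> linarith
    have := le_csSup (bddAbove_pbar_set hcoer) hmem
    linarith

end PbarAux

theorem characterization_of_sub_relaxation
    (N : ℕ) (hN : 1 ≤ N)
    (H : Fin N → ℝ → ℝ)
    (hHcont : ∀ α, Continuous (H α))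
    (hHcoer : ∀ α, CoerciveHam (H α))
    (F0 : (Fin N → ℝ) → ℝ)
    (hF0cont : Continuous F0)
    (hF0mono : Antitone F0) :
    (∀ p : Fin N → ℝ, F0 p = Rsub H F0 p) ↔
      (∀ p q : Fin N → ℝ,
        (∀ α, q α ∈ Icc (p α) (pbarUp (H α) (F0 p) (p α))) → F0 q = F0 p) := by
  haveI : Nonempty (Fin N) := Fin.pos_iff_nonempty.mp (by omega)
  have hbdd : ∀ p : Fin N → ℝ,
      ∀ v ∈ {v : ℝ | ∃ q : Fin N → ℝ, p ≤ q ∧ v = min (F0 q) (Hmin H q)}, v ≤ F0 p := by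
    rintro p v ⟨r, hpr, rfl⟩
    exact (min_le_left _ _).trans (hF0mono hpr)
  constructor
  · -- fixed point ⇒ constancy on the box
    intro hfix p q hq
    have hpq : p ≤ q := fun α => (hq α).1
    have hle : F0 q ≤ F0 p := hF0mono hpq
    rcases eq_or_lt_of_le hle with heq | hlt
    · exact heq
    exfalso
    set c := F0 p with hc
    -- pick t < 1 close to 1 with F0 (p + t (q - p)) < c
    have hcontt : Continuous (fun t : ℝ => F0 (fun α => p α + t * (q α - p α))) := by
      apply hF0cont.comp
      continuity
    have h1mem : (1 : ℝ) ∈ {t : ℝ | F0 (fun α => p α + t * (q α - p α)) < c} := by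
      simp only [mem_setOf_eq]
      have : (fun α => p α + 1 * (q α - p α)) = q := by ext α; ring
      rw [this]; exact hlt
    obtain ⟨ε, hε, hball⟩ :=
      Metric.isOpen_iff.mp (isOpen_lt hcontt continuous_const) 1 h1mem
    set t : ℝ := 1 - min ε 1 / 2 with ht
    have hmin1 : 0 < min ε 1 := lt_min hε one_pos
    have hmin2 : min ε 1 ≤ 1 := min_le_right _ _
    have ht0 : 0 < t := by rw [ht]; linarith
    have ht1 : t < 1 := by rw [ht]; linarith
    have htmem : F0 (fun α => p α + t * (q α - p α)) < c := by
      have : t ∈ Metric.ball (1 : ℝ) ε := by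
        rw [Metric.mem_ball, Real.dist_eq, ht, abs_lt]
        have : min ε 1 ≤ ε := min_le_left _ _
        constructor <;> linarith
      exact hball this
    set q' : Fin N → ℝ := fun α => p α + t * (q α - p α) with hq'
    have hpq' : ∀ α, p α ≤ q' α := fun α => by
      have := (hq α).1
      have : (0 : ℝ) ≤ t * (q α - p α) := mul_nonneg ht0.le (by linarith)
      simp only [hq']; linarith
    have hq'q : ∀ α, q' α ≤ q α := fun α => by
      have h1 := (hq α).1
      have : (0 : ℝ) ≤ (1 - t) * (q α - p α) :=
        mul_nonneg (by linarith) (by linarith)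
      simp only [hq']; nlinarith
    have hq'lt : ∀ α, p α < q α → q' α < q α := fun α hα => by
      have : (0 : ℝ) < (1 - t) * (q α - p α) :=
        mul_pos (by linarith) (by linarith)
      simp only [hq']; nlinarith
    -- finite set of strictly increasing coordinates
    set T : Finset (Fin N) := Finset.univ.filter (fun α => p α < q α) with hT
    have hTne : T.Nonempty := by
      by_contra hTe
      rw [Finset.not_nonempty_iff_eq_empty] at hTe
      have : q = p := by
        ext α
        have hα : α ∉ T := by rw [hTe]; exact Finset.notMem_empty α
        simp only [hT, Finset.mem_filter, Finset.mem_univ, true_and] at hα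
        exact le_antisymm (not_lt.mp hα) (hq α).1
      rw [this] at hlt
      exact lt_irrefl _ hlt
    set m : Fin N → ℝ := fun α => sSup (H α '' Icc (p α) (q' α)) with hm
    have hmlt : ∀ α ∈ T, m α < c := by
      intro α hα
      simp only [hT, Finset.mem_filter, Finset.mem_univ, true_and] at hα
      obtain ⟨x, hx, hxeq⟩ :=
        isCompact_Icc.exists_sSup_image_eq (nonempty_Icc.mpr (hpq' α))
          (hHcont α).continuousOn
      rw [hm]; dsimp only; rw [hxeq]
      refine PbarAux.lt_of_lt_pbarUp hx.1 ?_
      calc x ≤ q' α := hx.2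
        _ < q α := hq'lt α hα
        _ ≤ pbarUp (H α) c (p α) := (hq α).2
    set B : ℝ := max (F0 q') (T.sup' hTne m) with hB
    have hBlt : B < c := max_lt htmem ((Finset.sup'_lt_iff hTne).mpr hmlt)
    have hRle : Rsub H F0 p ≤ B := by
      rw [Rsub]
      refine csSup_le ⟨_, p, le_rfl, rfl⟩ ?_
      rintro v ⟨r, hpr, rfl⟩
      by_cases hrq : ∀ α, q' α ≤ r α
      · calc min (F0 r) (Hmin H r) ≤ F0 r := min_le_left _ _
          _ ≤ F0 q' := hF0mono hrq
          _ ≤ B := le_max_left _ _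
      · push_neg at hrq
        obtain ⟨α, hα⟩ := hrq
        have hαT : α ∈ T := by
          simp only [hT, Finset.mem_filter, Finset.mem_univ, true_and]
          by_contra hnlt
          have : q α = p α := le_antisymm (not_lt.mp hnlt) (hq α).1
          have hq'α : q' α = p α := by simp only [hq']; rw [this]; ring
          rw [hq'α] at hα
          exact absurd (hpr α) (not_le.mpr hα)
        have h1 : Hmin H r ≤ H α (r α) := by
          rw [Hmin]
          exact ciInf_le (Finite.bddBelow_range _) α
        have h2 : H α (r α) ≤ m α := by
          apply le_csSup (isCompact_Icc.bddAbove_image (hHcont α).continuousOn)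
          exact ⟨r α, ⟨hpr α, hα.le⟩, rfl⟩
        calc min (F0 r) (Hmin H r) ≤ Hmin H r := min_le_right _ _
          _ ≤ m α := h1.trans h2
          _ ≤ T.sup' hTne m := Finset.le_sup' m hαT
          _ ≤ B := le_max_right _ _
    have : c ≤ B := (hfix p).le.trans hRle
    linarith
  · -- constancy on the box ⇒ fixed point
    intro hbox p
    set c := F0 p with hc
    set pb : Fin N → ℝ := fun α => pbarUp (H α) c (p α) with hpb
    have hppb : p ≤ pb := fun α => PbarAux.le_pbarUp (hHcoer α)
    have hFpb : F0 pb = c := hbox p pb (fun α => ⟨hppb α, le_rfl⟩)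
    have hHminpb : c ≤ Hmin H pb :=
      le_ciInf fun α => PbarAux.c_le_pbarUp (hHcont α) (hHcoer α)
    have hub : Rsub H F0 p ≤ c := by
      rw [Rsub]; exact csSup_le ⟨_, ⟨p, le_rfl, rfl⟩⟩ (hbdd p)
    have hlb : c ≤ Rsub H F0 p := by
      rw [Rsub]
      exact le_csSup_of_le ⟨F0 p, hbdd p⟩ ⟨pb, hppb, rfl⟩ (le_min hFpb.ge hHminpb)
    linarith
end
end
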